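/- arXiv:2012.05778 — 6 statements merged into one kernel-verified Lean document; each statement's English description precedes it below -/
import Mathlib

section
/- If (m, n) is a good pair, then (m, n) is unsolvable; that is, there are no integers k, ℓ ≥ 1 with k/m^{ℓ-1} = 1/n^ℓ. -/
/-- `(m, n)` is a good pair: writing the prime factorizations of `n` and `m` over a common
set of primes, `m > n`, each exponent in `m` is at least the corresponding exponent in `n`
(in particular every prime dividing `n` divides `m`), and some prime occurs with equal
positive exponent in both. -/
def GoodPair (m n : ℕ) : Prop :=
  n < m ∧ (∀ p : ℕ, p.Prime → p ∣ n → p ∣ m) ∧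
    (∀ p : ℕ, p.Prime → n.factorization p ≤ m.factorization p) ∧
    (∃ p : ℕ, p.Prime ∧ 0 < n.factorization p ∧ n.factorization p = m.factorization p)

/-- A good pair is unsolvable: there are no integers `k, ℓ ≥ 1` with `k/m^(ℓ-1) = 1/n^ℓ`. -/
theorem stmt4 (m n : ℕ) (hm : 2 ≤ m) (hn : 2 ≤ n) (h : GoodPair m n) :
    ¬ ∃ (k ℓ : ℕ), 1 ≤ k ∧ 1 ≤ ℓ ∧ (k : ℝ) / (m : ℝ) ^ (ℓ - 1) = 1 / (n : ℝ) ^ ℓ := by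
  rintro ⟨k, ℓ, hk, hℓ, heq⟩
  obtain ⟨-, -, -, p, hp, ha, hab⟩ := h
  have hm0 : (0:ℝ) < (m:ℝ) := by positivity
  have hn0 : (0:ℝ) < (n:ℝ) := by positivity
  have hmain : (k : ℝ) * (n:ℝ) ^ ℓ = (m:ℝ) ^ (ℓ - 1) := by
    field_simp at heq
    linarith [heq]
  have hnat : k * n ^ ℓ = m ^ (ℓ - 1) := by exact_mod_cast hmain
  have hk0 : k ≠ 0 := by omega
  have hn0' : n ≠ 0 := by omega
  have hfac := congrArg (fun t => t.factorization p) hnat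
  simp only [Nat.factorization_mul hk0 (pow_ne_zero ℓ hn0'), Nat.factorization_pow,
    Finsupp.add_apply, Finsupp.smul_apply, smul_eq_mul] at hfac
  set a := n.factorization p with hadef
  have : k.factorization p + ℓ * a = (ℓ - 1) * a := by
    rw [hfac, ← hab]
  have hlt : (ℓ - 1) * a < ℓ * a := (Nat.mul_lt_mul_right ha).mpr (by omega)
  omega
end

section
/- For any integers m ≥ 2 and a ≥ 1, the collection of m-adic doubling measures equals the collection of m^a-adic doubling measures: 𝒟_m = 𝒟_{m^a}. -/
open MeasureTheory

/-- The `j`-th `n`-adic child (`1 ≤ j ≤ n`) of the `n`-adic interval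
`[(k-1)/n^ℓ, k/n^ℓ)`. -/
noncomputable def adicChild (n : ℕ) (ℓ k : ℤ) (j : ℕ) : Set ℝ :=
  Set.Ico (((k : ℝ) - 1) / (n : ℝ) ^ ℓ + ((j : ℝ) - 1) / (n : ℝ) ^ (ℓ + 1))
    (((k : ℝ) - 1) / (n : ℝ) ^ ℓ + (j : ℝ) / (n : ℝ) ^ (ℓ + 1))

/-- A measure `μ` on `ℝ` is `n`-adic doubling if there is `C > 0` such that for every
`n`-adic interval and any two of its `n`-adic children the ratio of the `μ`-measures lies
in `[1/C, C]`. -/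
def IsAdicDoubling (n : ℕ) (μ : Measure ℝ) : Prop :=
  ∃ C : ℝ, 0 < C ∧ ∀ (ℓ k : ℤ) (j₁ j₂ : ℕ), 1 ≤ j₁ → j₁ ≤ n → 1 ≤ j₂ → j₂ ≤ n →
    1 / C ≤ (μ (adicChild n ℓ k j₁)).toReal / (μ (adicChild n ℓ k j₂)).toReal ∧
      (μ (adicChild n ℓ k j₁)).toReal / (μ (adicChild n ℓ k j₂)).toReal ≤ C

namespace AdicAux

/-- The `n`-adic interval `[(K-1)/n^ℓ, K/n^ℓ)`. -/
noncomputable def adicI (n : ℕ) (ℓ K : ℤ) : Set ℝ :=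
  Set.Ico (((K : ℝ) - 1) / (n : ℝ) ^ ℓ) ((K : ℝ) / (n : ℝ) ^ ℓ)

lemma ediv_ediv (x b c : ℤ) (hb : 0 < b) (hc : 0 < c) : x / b / c = x / (b * c) := by
  have h1 := Int.mul_ediv_add_emod x b
  have h2 := Int.mul_ediv_add_emod (x / b) c
  have h3 := Int.emod_nonneg x (by omega : b ≠ 0)
  have h4 := Int.emod_lt_of_pos x hb
  have h5 := Int.emod_nonneg (x / b) (by omega : c ≠ 0)
  have h6 := Int.emod_lt_of_pos (x / b) hc
  have hx : x = (b * ((x / b) % c) + x % b) + (b * c) * (x / b / c) := by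
    nlinarith [h1, h2]
  have hr0 : (0:ℤ) ≤ b * (x / b % c) + x % b := by nlinarith
  have hr1 : b * (x / b % c) + x % b < b * c := by nlinarith
  conv_rhs => rw [hx]
  rw [Int.add_mul_ediv_left _ _ (by positivity : b * c ≠ 0),
    Int.ediv_eq_zero_of_lt hr0 hr1, zero_add]

lemma adicChild_eq_adicI (n : ℕ) (hn : 0 < n) (ℓ k : ℤ) (j : ℕ) :
    adicChild n ℓ k j = adicI n (ℓ + 1) ((k - 1) * n + j) := by
  have hn0 : (n : ℝ) ≠ 0 := by positivity
  have hz : ((n : ℝ)) ^ ℓ ≠ 0 := zpow_ne_zero _ hn0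
  have key : ∀ u v : ℝ, u / (n : ℝ) ^ ℓ + v / ((n : ℝ) ^ ℓ * n) = (u * n + v) / ((n : ℝ) ^ ℓ * n) := by
    intro u v
    field_simp
  unfold adicChild adicI
  rw [zpow_add₀ hn0, zpow_one, key, key]
  congr 2 <;> push_cast <;> ring

lemma adicI_pow (m a : ℕ) (hm : 0 < m) (ℓ K : ℤ) :
    adicI (m ^ a) ℓ K = adicI m ((a : ℤ) * ℓ) K := by
  unfold adicI
  have : ((m ^ a : ℕ) : ℝ) ^ ℓ = (m : ℝ) ^ ((a : ℤ) * ℓ) := by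
    push_cast
    rw [← zpow_natCast (m : ℝ) a, ← zpow_mul]
  rw [this]

lemma measure_Ico_sum (μ : Measure ℝ) (c : ℝ) (hc : 0 ≤ c) (A : ℤ) (N : ℕ) :
    μ (Set.Ico ((A : ℝ) * c) (((A : ℝ) + N) * c)) =
      ∑ i ∈ Finset.range N, μ (Set.Ico (((A : ℝ) + i) * c) (((A : ℝ) + i + 1) * c)) := by
  induction N with
  | zero => simp
  | succ N ih =>
    rw [Finset.sum_range_succ, ← ih]
    rw [← measure_union (Set.Ico_disjoint_Ico_same) measurableSet_Ico,
      Set.Ico_union_Ico_eq_Ico (by nlinarith) (by push_cast; nlinarith)]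
    push_cast
    ring_nf


lemma measure_adicI_eq_sum (μ : Measure ℝ) (m : ℕ) (hm : 0 < m) (L K : ℤ) (d : ℕ) :
    μ (adicI m L K) =
      ∑ i ∈ Finset.range (m ^ d), μ (adicI m (L + d) ((K - 1) * (m : ℤ) ^ d + 1 + i)) := by
  have hm0 : ((m : ℝ)) ≠ 0 := Nat.cast_ne_zero.mpr hm.ne'
  have hL : ((m : ℝ)) ^ L ≠ 0 := zpow_ne_zero _ hm0
  have hLd : ((m : ℝ)) ^ (L + (d : ℤ)) ≠ 0 := zpow_ne_zero _ hm0
  have hsplit : ((m : ℝ)) ^ (L + (d : ℤ)) = (m : ℝ) ^ L * (m : ℝ) ^ d := by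
    rw [zpow_add₀ hm0, zpow_natCast]
  set c : ℝ := ((m : ℝ) ^ (L + (d : ℤ)))⁻¹ with hcdef
  have eA : ((K : ℝ) - 1) / (m : ℝ) ^ L = ((((K - 1) * (m : ℤ) ^ d : ℤ)) : ℝ) * c := by
    rw [hcdef, hsplit]
    push_cast
    field_simp
  have eB : (K : ℝ) / (m : ℝ) ^ L = (((((K - 1) * (m : ℤ) ^ d : ℤ)) : ℝ) + ((m ^ d : ℕ) : ℝ)) * c := by
    rw [hcdef, hsplit]
    push_cast
    field_simp
    ring
  have h1 : adicI m L K = Set.Ico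
      (((((K - 1) * (m : ℤ) ^ d : ℤ)) : ℝ) * c)
      ((((((K - 1) * (m : ℤ) ^ d : ℤ)) : ℝ) + ((m ^ d : ℕ) : ℝ)) * c) := by
    unfold adicI
    rw [eA, eB]
  rw [h1, measure_Ico_sum μ _ (by positivity) ((K - 1) * (m : ℤ) ^ d) (m ^ d)]
  apply Finset.sum_congr rfl
  intro i _
  congr 1
  unfold adicI
  have eC : ((((K - 1) * (m : ℤ) ^ d + 1 + (i : ℤ) : ℤ)) : ℝ) - 1 =
      ((((K - 1) * (m : ℤ) ^ d : ℤ)) : ℝ) + (i : ℝ) := by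
    push_cast
    ring
  have eD : ((((K - 1) * (m : ℤ) ^ d + 1 + (i : ℤ) : ℤ)) : ℝ) =
      ((((K - 1) * (m : ℤ) ^ d : ℤ)) : ℝ) + (i : ℝ) + 1 := by
    push_cast
    ring
  rw [eC, eD, div_eq_mul_inv, div_eq_mul_inv]

/-- One-sided sibling comparison. -/
def Sib (n : ℕ) (μ : Measure ℝ) (C : ℝ) : Prop :=
  ∀ ℓ K K' : ℤ, (K - 1) / (n : ℤ) = (K' - 1) / (n : ℤ) →
    (μ (adicI n ℓ K)).toReal ≤ C * (μ (adicI n ℓ K')).toReal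

/-- All `n`-adic intervals have positive finite measure. -/
def Pos (n : ℕ) (μ : Measure ℝ) : Prop :=
  ∀ ℓ K : ℤ, 0 < (μ (adicI n ℓ K)).toReal

lemma adicI_eq_child (n : ℕ) (hn : 0 < n) (ℓ K : ℤ) :
    adicI n ℓ K = adicChild n (ℓ - 1) ((K - 1) / n + 1) (((K - 1) % n).toNat + 1) := by
  have hne : (n : ℤ) ≠ 0 := by exact_mod_cast hn.ne'
  have h3 := Int.emod_nonneg (K - 1) hne
  rw [adicChild_eq_adicI n hn]
  have h1 := Int.mul_ediv_add_emod (K - 1) (n : ℤ)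
  have : ((K - 1) / ↑n + 1 - 1) * ↑n + ((((K - 1) % ↑n).toNat + 1 : ℕ) : ℤ) = K := by
    push_cast [Int.toNat_of_nonneg h3]
    linarith [h1]
  rw [sub_add_cancel, this]

lemma child_j_bounds (n : ℕ) (hn : 0 < n) (K : ℤ) :
    1 ≤ ((K - 1) % n).toNat + 1 ∧ ((K - 1) % n).toNat + 1 ≤ n := by
  have hne : (n : ℤ) ≠ 0 := by exact_mod_cast hn.ne'
  have h3 := Int.emod_nonneg (K - 1) hne
  have h4 := Int.emod_lt_of_pos (K - 1) (by exact_mod_cast hn : (0 : ℤ) < n)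
  constructor
  · omega
  · omega

lemma isAdicDoubling_to_sib {n : ℕ} {μ : Measure ℝ} (hn : 0 < n) (h : IsAdicDoubling n μ) :
    ∃ C : ℝ, 0 < C ∧ Pos n μ ∧ Sib n μ C := by
  obtain ⟨C, hC, hb⟩ := h
  have hpos : Pos n μ := by
    intro ℓ K
    have hj := child_j_bounds n hn K
    have h2 := (hb (ℓ - 1) ((K - 1) / n + 1) (((K - 1) % n).toNat + 1) (((K - 1) % n).toNat + 1)
      hj.1 hj.2 hj.1 hj.2).1
    rw [← adicI_eq_child n hn ℓ K] at h2
    rcases eq_or_lt_of_le (ENNReal.toReal_nonneg : 0 ≤ (μ (adicI n ℓ K)).toReal) with h0 | h0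
    · exfalso
      rw [← h0, div_zero] at h2
      have : (0 : ℝ) < 1 / C := by positivity
      linarith
    · exact h0
  refine ⟨C, hC, hpos, ?_⟩
  intro ℓ K K' hKK
  have hjK := child_j_bounds n hn K
  have hjK' := child_j_bounds n hn K'
  have h2 := (hb (ℓ - 1) ((K - 1) / n + 1) (((K - 1) % n).toNat + 1) (((K' - 1) % n).toNat + 1)
    hjK.1 hjK.2 hjK'.1 hjK'.2).2
  rw [← adicI_eq_child n hn ℓ K] at h2
  have he : adicChild n (ℓ - 1) ((K - 1) / ↑n + 1) (((K' - 1) % ↑n).toNat + 1) = adicI n ℓ K' := by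
    rw [hKK, ← adicI_eq_child n hn ℓ K']
  rw [he] at h2
  have ht' := hpos ℓ K'
  calc (μ (adicI n ℓ K)).toReal
      = (μ (adicI n ℓ K)).toReal / (μ (adicI n ℓ K')).toReal * (μ (adicI n ℓ K')).toReal := by
        field_simp
    _ ≤ C * (μ (adicI n ℓ K')).toReal := by
        apply mul_le_mul_of_nonneg_right h2 ht'.le

lemma isAdicDoubling_of_sib {n : ℕ} {μ : Measure ℝ} (hn : 0 < n) {C : ℝ} (hC : 0 < C)
    (hpos : Pos n μ) (hsib : Sib n μ C) : IsAdicDoubling n μ := by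
  refine ⟨C, hC, ?_⟩
  intro ℓ k j₁ j₂ h11 h12 h21 h22
  have hne : (n : ℤ) ≠ 0 := by exact_mod_cast hn.ne'
  have hsibling : ∀ j : ℕ, 1 ≤ j → j ≤ n → ((k - 1) * (n : ℤ) + j - 1) / n = k - 1 := by
    intro j hj1 hj2
    have hj1' : (1 : ℤ) ≤ (j : ℤ) := by exact_mod_cast hj1
    have hj2' : (j : ℤ) ≤ (n : ℤ) := by exact_mod_cast hj2
    have hnz : (1 : ℤ) ≤ (n : ℤ) := by exact_mod_cast hn
    have : (k - 1) * (n : ℤ) + j - 1 = ((j : ℤ) - 1) + (k - 1) * n := by ring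
    rw [this, Int.add_mul_ediv_right _ _ hne,
      Int.ediv_eq_zero_of_lt (by omega) (by omega), zero_add]
  rw [adicChild_eq_adicI n hn ℓ k j₁, adicChild_eq_adicI n hn ℓ k j₂]
  have hup := hsib (ℓ + 1) ((k - 1) * n + j₁) ((k - 1) * n + j₂)
    (by rw [hsibling j₁ h11 h12, hsibling j₂ h21 h22])
  have hdown := hsib (ℓ + 1) ((k - 1) * n + j₂) ((k - 1) * n + j₁)
    (by rw [hsibling j₁ h11 h12, hsibling j₂ h21 h22])
  have t1 := hpos (ℓ + 1) ((k - 1) * n + j₁)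
  have t2 := hpos (ℓ + 1) ((k - 1) * n + j₂)
  constructor
  · rw [div_le_div_iff₀ hC t2]
    nlinarith [hdown]
  · rw [div_le_iff₀ t2]
    exact hup
lemma pos_ne_top {n : ℕ} {μ : Measure ℝ} (h : Pos n μ) (ℓ K : ℤ) : μ (adicI n ℓ K) ≠ ⊤ := by
  have h2 := h ℓ K
  rw [ENNReal.toReal_pos_iff] at h2
  exact h2.2.ne

lemma toReal_adicI_sum {μ : Measure ℝ} {m : ℕ} (hm : 0 < m) (hfin : ∀ ℓ K : ℤ, μ (adicI m ℓ K) ≠ ⊤)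
    (L K : ℤ) (d : ℕ) :
    (μ (adicI m L K)).toReal =
      ∑ i ∈ Finset.range (m ^ d), (μ (adicI m (L + d) ((K - 1) * (m : ℤ) ^ d + 1 + i))).toReal := by
  rw [measure_adicI_eq_sum μ m hm L K d, ENNReal.toReal_sum]
  intro i _
  exact hfin _ _

section Doubling

variable {m : ℕ} {μ : Measure ℝ} {C : ℝ} (hm : 2 ≤ m) (hC : 0 < C)
  (hpos : Pos m μ) (hsib : Sib m μ C)

include hm hC hpos hsib

lemma child_parent (L K : ℤ) :
    (μ (adicI m (L + 1) K)).toReal ≤ (μ (adicI m L ((K - 1) / m + 1))).toReal ∧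
      (μ (adicI m L ((K - 1) / m + 1))).toReal ≤ (m : ℝ) * C * (μ (adicI m (L + 1) K)).toReal := by
  have hm0 : 0 < m := by omega
  have hmz : ((m : ℤ)) ≠ 0 := by exact_mod_cast hm0.ne'
  set P : ℤ := (K - 1) / m + 1 with hP
  have hsum := toReal_adicI_sum hm0 (pos_ne_top hpos) L P 1
  have hone : L + ((1 : ℕ) : ℤ) = L + 1 := by norm_num
  rw [hone] at hsum
  simp only [pow_one] at hsum
  -- each summand is a sibling of K
  have hsibK : ∀ i : ℕ, i < m → ((P - 1) * (m : ℤ) + 1 + (i : ℤ) - 1) / m = (K - 1) / m := by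
    intro i hi
    have : (P - 1) * (m : ℤ) + 1 + (i : ℤ) - 1 = (i : ℤ) + (P - 1) * m := by ring
    rw [this, Int.add_mul_ediv_right _ _ hmz,
      Int.ediv_eq_zero_of_lt (by positivity) (by exact_mod_cast hi), zero_add, hP]
    ring
  -- K itself is a summand
  have hK3 := Int.emod_nonneg (K - 1) hmz
  have hK4 := Int.emod_lt_of_pos (K - 1) (by exact_mod_cast hm0 : (0 : ℤ) < m)
  set i₀ : ℕ := ((K - 1) % m).toNat with hi₀
  have hi₀m : i₀ ∈ Finset.range m := by
    rw [Finset.mem_range]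
    omega
  have hKi : (P - 1) * (m : ℤ) + 1 + (i₀ : ℤ) = K := by
    have h1 := Int.mul_ediv_add_emod (K - 1) (m : ℤ)
    have h2 : ((i₀ : ℤ)) = (K - 1) % m := Int.toNat_of_nonneg hK3
    have h3 : (P - 1) * (m : ℤ) = (m : ℤ) * ((K - 1) / m) := by
      rw [hP]
      ring
    linarith
  constructor
  · rw [hsum]
    have hle := Finset.single_le_sum
      (f := fun i : ℕ => (μ (adicI m (L + 1) ((P - 1) * (m : ℤ) + 1 + i))).toReal)
      (fun i _ => ENNReal.toReal_nonneg) hi₀m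
    rwa [hKi] at hle
  · rw [hsum]
    have hbound : ∀ i ∈ Finset.range m,
        (μ (adicI m (L + 1) ((P - 1) * (m : ℤ) + 1 + i))).toReal ≤
          C * (μ (adicI m (L + 1) K)).toReal := by
      intro i hi
      exact hsib (L + 1) _ K (hsibK i (Finset.mem_range.mp hi))
    calc ∑ i ∈ Finset.range m, (μ (adicI m (L + 1) ((P - 1) * (m : ℤ) + 1 + i))).toReal
        ≤ ∑ _i ∈ Finset.range m, C * (μ (adicI m (L + 1) K)).toReal :=
          Finset.sum_le_sum hbound
      _ = (m : ℝ) * C * (μ (adicI m (L + 1) K)).toReal := by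
          rw [Finset.sum_const, Finset.card_range]
          push_cast
          ring

lemma descend (d : ℕ) : ∀ L K : ℤ,
    (μ (adicI m (L + d) K)).toReal ≤ (μ (adicI m L ((K - 1) / (m : ℤ) ^ d + 1))).toReal ∧
      (μ (adicI m L ((K - 1) / (m : ℤ) ^ d + 1))).toReal ≤
        ((m : ℝ) * C) ^ d * (μ (adicI m (L + d) K)).toReal := by
  induction d with
  | zero =>
    intro L K
    simp [Int.ediv_one]
  | succ d ih =>
    intro L K
    have hm0 : 0 < m := by omega
    have heq : L + ((d + 1 : ℕ) : ℤ) = (L + 1) + (d : ℤ) := by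
      push_cast
      ring
    rw [heq]
    obtain ⟨ih1, ih2⟩ := ih (L + 1) K
    set A : ℤ := (K - 1) / (m : ℤ) ^ d + 1 with hA
    obtain ⟨cp1, cp2⟩ := child_parent hm hC hpos hsib L A
    have hAK : (A - 1) / (m : ℤ) + 1 = (K - 1) / (m : ℤ) ^ (d + 1) + 1 := by
      rw [hA, add_sub_cancel_right,
        ediv_ediv _ _ _ (by positivity) (by exact_mod_cast hm0), ← pow_succ]
    rw [hAK] at cp1 cp2
    constructor
    · exact le_trans ih1 cp1
    · calc (μ (adicI m L ((K - 1) / (m : ℤ) ^ (d + 1) + 1))).toReal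
          ≤ (m : ℝ) * C * (μ (adicI m (L + 1) A)).toReal := cp2
        _ ≤ (m : ℝ) * C * (((m : ℝ) * C) ^ d * (μ (adicI m (L + 1 + d) K)).toReal) := by
            apply mul_le_mul_of_nonneg_left ih2 (by positivity)
        _ = ((m : ℝ) * C) ^ (d + 1) * (μ (adicI m (L + 1 + d) K)).toReal := by
            ring

lemma sib_depth (d : ℕ) (L K K' : ℤ) (h : (K - 1) / (m : ℤ) ^ d = (K' - 1) / (m : ℤ) ^ d) :
    (μ (adicI m L K)).toReal ≤ ((m : ℝ) * C) ^ d * (μ (adicI m L K')).toReal := by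
  have h1 := (descend hm hC hpos hsib d (L - d) K).1
  have h2 := (descend hm hC hpos hsib d (L - d) K').2
  rw [sub_add_cancel] at h1 h2
  rw [h] at h1
  exact le_trans h1 h2

lemma dir1 (a : ℕ) : Pos (m ^ a) μ ∧ Sib (m ^ a) μ (((m : ℝ) * C) ^ a) := by
  have hm0 : 0 < m := by omega
  constructor
  · intro ℓ K
    rw [adicI_pow m a hm0]
    exact hpos _ _
  · intro ℓ K K' h
    rw [adicI_pow m a hm0, adicI_pow m a hm0]
    apply sib_depth hm hC hpos hsib a ((a : ℤ) * ℓ) K K'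
    have hcast : ((m ^ a : ℕ) : ℤ) = (m : ℤ) ^ a := by push_cast; ring
    rwa [hcast] at h

end Doubling
lemma exists_Q (a : ℕ) (ha : 0 < a) (ℓ : ℤ) : ∃ Q : ℤ, ℓ ≤ (a : ℤ) * Q ∧ (a : ℤ) * Q < ℓ + a := by
  have hne : ((a : ℤ)) ≠ 0 := by exact_mod_cast ha.ne'
  have h1 := Int.mul_ediv_add_emod (-ℓ) (a : ℤ)
  have h2 := Int.emod_nonneg (-ℓ) hne
  have h3 := Int.emod_lt_of_pos (-ℓ) (by exact_mod_cast ha : (0 : ℤ) < a)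
  refine ⟨-((-ℓ) / a), ?_, ?_⟩
  · rw [mul_neg]
    linarith
  · rw [mul_neg]
    linarith

section Doubling2

variable {m a : ℕ} {μ : Measure ℝ} {C : ℝ} (hm : 2 ≤ m) (ha : 1 ≤ a) (hC : 0 < C)
  (hpos : Pos (m ^ a) μ) (hsib : Sib (m ^ a) μ C)

include hm ha hC hpos hsib

lemma posQ : ∀ Q K : ℤ, 0 < (μ (adicI m ((a : ℤ) * Q) K)).toReal := by
  intro Q K
  rw [← adicI_pow m a (by omega)]
  exact hpos Q K

lemma sibQ : ∀ (Q K K' : ℤ), (K - 1) / (m : ℤ) ^ a = (K' - 1) / (m : ℤ) ^ a →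
    (μ (adicI m ((a : ℤ) * Q) K)).toReal ≤ C * (μ (adicI m ((a : ℤ) * Q) K')).toReal := by
  intro Q K K' h
  rw [← adicI_pow m a (by omega), ← adicI_pow m a (by omega)]
  apply hsib Q K K'
  have hcast : ((m ^ a : ℕ) : ℤ) = (m : ℤ) ^ a := by push_cast; ring
  rwa [hcast]

lemma dir2_pos : Pos m μ := by
  have hm0 : 0 < m := by omega
  intro ℓ K
  obtain ⟨Q, hQ1, hQ2⟩ := exists_Q a (by omega) ℓ
  set d : ℕ := ((a : ℤ) * Q - ℓ).toNat with hd
  have hdz : ((d : ℤ)) = (a : ℤ) * Q - ℓ := Int.toNat_of_nonneg (by omega)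
  have hlev : ℓ + (d : ℤ) = (a : ℤ) * Q := by omega
  have hsum := measure_adicI_eq_sum μ m hm0 ℓ K d
  rw [hlev] at hsum
  have hterm : ∀ i : ℕ, 0 < (μ (adicI m ((a : ℤ) * Q) ((K - 1) * (m : ℤ) ^ d + 1 + i))).toReal :=
    fun i => posQ hm ha hC hpos hsib Q _
  rw [ENNReal.toReal_pos_iff]
  constructor
  · rw [hsum]
    have h0 : (0 : ℕ) ∈ Finset.range (m ^ d) := by
      rw [Finset.mem_range]
      exact pow_pos hm0 d
    calc (0 : ENNReal) < μ (adicI m ((a : ℤ) * Q) ((K - 1) * (m : ℤ) ^ d + 1 + (0 : ℕ))) := by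
          have := hterm 0
          rw [ENNReal.toReal_pos_iff] at this
          exact this.1
      _ ≤ _ := Finset.single_le_sum (f := fun i : ℕ =>
          μ (adicI m ((a : ℤ) * Q) ((K - 1) * (m : ℤ) ^ d + 1 + i))) (fun i _ => zero_le) h0
  · rw [hsum]
    apply ENNReal.sum_lt_top.mpr
    intro i _
    have := hterm i
    rw [ENNReal.toReal_pos_iff] at this
    exact this.2

lemma dir2_sib : Sib m μ ((m : ℝ) ^ a * C) := by
  have hm0 : 0 < m := by omega
  have hmz : ((m : ℤ)) ≠ 0 := by exact_mod_cast hm0.ne'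
  have hPos : Pos m μ := dir2_pos hm ha hC hpos hsib
  intro ℓ K K' h
  obtain ⟨Q, hQ1, hQ2⟩ := exists_Q a (by omega) ℓ
  set d : ℕ := ((a : ℤ) * Q - ℓ).toNat with hd
  have hdz : ((d : ℤ)) = (a : ℤ) * Q - ℓ := Int.toNat_of_nonneg (by omega)
  have hda : d < a := by omega
  have hlev : ℓ + (d : ℤ) = (a : ℤ) * Q := by omega
  have hsum := toReal_adicI_sum hm0 (pos_ne_top hPos) ℓ K d
  have hsum' := toReal_adicI_sum hm0 (pos_ne_top hPos) ℓ K' d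
  rw [hlev] at hsum hsum'
  -- the `m^a`-adic class of each subinterval depends only on `(K-1)/m`
  have hclass : ∀ (J : ℤ) (i : ℕ), i < m ^ d →
      ((J - 1) * (m : ℤ) ^ d + 1 + (i : ℤ) - 1) / (m : ℤ) ^ a =
        ((J - 1) / m) / (m : ℤ) ^ (a - 1 - d) := by
    intro J i hi
    have e1 : (J - 1) * (m : ℤ) ^ d + 1 + (i : ℤ) - 1 = (i : ℤ) + (m : ℤ) ^ d * (J - 1) := by
      ring
    have hia : ((i : ℤ)) < (m : ℤ) ^ d := by exact_mod_cast hi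
    have step1 : ((i : ℤ) + (m : ℤ) ^ d * (J - 1)) / (m : ℤ) ^ d = J - 1 := by
      rw [Int.add_mul_ediv_left _ _ (by positivity : ((m : ℤ)) ^ d ≠ 0),
        Int.ediv_eq_zero_of_lt (by positivity) hia, zero_add]
    have hpowsplit : (m : ℤ) ^ a = (m : ℤ) ^ d * ((m : ℤ) * (m : ℤ) ^ (a - 1 - d)) := by
      rw [← pow_succ' (m : ℤ) (a - 1 - d), ← pow_add]
      congr 1
      omega
    rw [e1, hpowsplit, ← ediv_ediv _ _ _ (by positivity) (by positivity), step1,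
      ← ediv_ediv _ _ _ (by exact_mod_cast hm0) (by positivity)]
  have hmpd : (0 : ℕ) < m ^ d := pow_pos hm0 d
  have h0mem : (0 : ℕ) ∈ Finset.range (m ^ d) := by
    rw [Finset.mem_range]
    exact hmpd
  -- reference subinterval of K'
  set R : ℤ := (K' - 1) * (m : ℤ) ^ d + 1 + ((0 : ℕ) : ℤ) with hR
  have hRle : (μ (adicI m ((a : ℤ) * Q) R)).toReal ≤ (μ (adicI m ℓ K')).toReal := by
    rw [hsum']
    exact Finset.single_le_sum (f := fun i : ℕ =>
      (μ (adicI m ((a : ℤ) * Q) ((K' - 1) * (m : ℤ) ^ d + 1 + i))).toReal)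
      (fun i _ => ENNReal.toReal_nonneg) h0mem
  have hRpos : 0 < (μ (adicI m ((a : ℤ) * Q) R)).toReal := posQ hm ha hC hpos hsib Q R
  have hup : (μ (adicI m ℓ K)).toReal ≤ ((m : ℝ) ^ d * C) * (μ (adicI m ((a : ℤ) * Q) R)).toReal := by
    rw [hsum]
    have hbound : ∀ i ∈ Finset.range (m ^ d),
        (μ (adicI m ((a : ℤ) * Q) ((K - 1) * (m : ℤ) ^ d + 1 + i))).toReal ≤
          C * (μ (adicI m ((a : ℤ) * Q) R)).toReal := by
      intro i hi
      apply sibQ hm ha hC hpos hsib Q _ R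
      rw [hclass K i (Finset.mem_range.mp hi), hR, hclass K' 0 hmpd, h]
    calc ∑ i ∈ Finset.range (m ^ d),
          (μ (adicI m ((a : ℤ) * Q) ((K - 1) * (m : ℤ) ^ d + 1 + i))).toReal
        ≤ ∑ _i ∈ Finset.range (m ^ d), C * (μ (adicI m ((a : ℤ) * Q) R)).toReal :=
          Finset.sum_le_sum hbound
      _ = ((m : ℝ) ^ d * C) * (μ (adicI m ((a : ℤ) * Q) R)).toReal := by
          rw [Finset.sum_const, Finset.card_range]
          push_cast
          ring
  have hmono : ((m : ℝ)) ^ d ≤ (m : ℝ) ^ a := by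
    apply pow_le_pow_right₀ (by exact_mod_cast (by omega : 1 ≤ m)) (by omega)
  calc (μ (adicI m ℓ K)).toReal
      ≤ ((m : ℝ) ^ d * C) * (μ (adicI m ((a : ℤ) * Q) R)).toReal := hup
    _ ≤ ((m : ℝ) ^ d * C) * (μ (adicI m ℓ K')).toReal := by
        apply mul_le_mul_of_nonneg_left hRle (by positivity)
    _ ≤ ((m : ℝ) ^ a * C) * (μ (adicI m ℓ K')).toReal := by
        apply mul_le_mul_of_nonneg_right (by nlinarith) ENNReal.toReal_nonneg

end Doubling2

end AdicAux


/-- For integers `m ≥ 2` and `a ≥ 1`, the collection of `m`-adic doubling measures equals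
the collection of `m^a`-adic doubling measures: `𝒟_m = 𝒟_{m^a}`. -/
theorem stmt7 (m a : ℕ) (hm : 2 ≤ m) (ha : 1 ≤ a) :
    {μ : Measure ℝ | IsAdicDoubling m μ} = {μ : Measure ℝ | IsAdicDoubling (m ^ a) μ} := by
  have hm0 : 0 < m := by omega
  have hma0 : 0 < m ^ a := pow_pos hm0 a
  ext μ
  simp only [Set.mem_setOf_eq]
  constructor
  · intro h
    obtain ⟨C, hC, hpos, hsib⟩ := AdicAux.isAdicDoubling_to_sib hm0 h
    obtain ⟨hpos', hsib'⟩ := AdicAux.dir1 hm hC hpos hsib a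
    exact AdicAux.isAdicDoubling_of_sib hma0 (by positivity) hpos' hsib'
  · intro h
    obtain ⟨C, hC, hpos, hsib⟩ := AdicAux.isAdicDoubling_to_sib hma0 h
    have hpos' := AdicAux.dir2_pos hm ha hC hpos hsib
    have hsib' := AdicAux.dir2_sib hm ha hC hpos hsib
    exact AdicAux.isAdicDoubling_of_sib hm0 (by positivity) hpos' hsib'
end

section
/- If log(n)/log(m) is rational for integers m, n ≥ 2, then there exists an integer 𝔫 ≥ 2 such that both n and m are integer powers of 𝔫. -/
/-- If `log n / log m` is rational for integers `m, n ≥ 2`, then there is an integer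
`𝔫 ≥ 2` such that both `n` and `m` are integer powers of `𝔫`. -/
theorem stmt8 (m n : ℕ) (hm : 2 ≤ m) (hn : 2 ≤ n)
    (h : ∃ q : ℚ, Real.log n / Real.log m = (q : ℝ)) :
    ∃ 𝔫 : ℕ, 2 ≤ 𝔫 ∧ ∃ s t : ℕ, n = 𝔫 ^ s ∧ m = 𝔫 ^ t := by
  obtain ⟨q, hq⟩ := h
  have hm1 : (1:ℝ) < m := by exact_mod_cast by omega
  have hn1 : (1:ℝ) < n := by exact_mod_cast by omega
  have hlm : 0 < Real.log m := Real.log_pos hm1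
  have hln : 0 < Real.log n := Real.log_pos hn1
  have hqpos : 0 < (q:ℝ) := hq ▸ div_pos hln hlm
  have hq0 : 0 < q := by exact_mod_cast hqpos
  set a : ℕ := q.num.toNat with ha
  set b : ℕ := q.den with hb
  have hapos : 0 < a := by
    have := Rat.num_pos.mpr hq0
    omega
  have hbpos : 0 < b := q.pos
  have hcast : (q:ℝ) = (a:ℝ) / (b:ℝ) := by
    rw [Rat.cast_def]
    congr 1
    have hz : (a:ℤ) = q.num := Int.toNat_of_nonneg (le_of_lt (Rat.num_pos.mpr hq0))
    exact_mod_cast hz.symm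
  have key : (n:ℝ) ^ b = (m:ℝ) ^ a := by
    have hlog : (b:ℝ) * Real.log n = (a:ℝ) * Real.log m := by
      have hx : Real.log n = (a:ℝ) / (b:ℝ) * Real.log m := by
        rw [← hcast, ← hq, div_mul_cancel₀ _ (ne_of_gt hlm)]
      rw [hx]
      have hbne : (b:ℝ) ≠ 0 := by positivity
      field_simp
    have h1 : Real.log ((n:ℝ) ^ b) = Real.log ((m:ℝ) ^ a) := by
      rw [Real.log_pow, Real.log_pow]; exact_mod_cast hlog
    have hnp : (0:ℝ) < (n:ℝ) ^ b := by positivity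
    have hmp : (0:ℝ) < (m:ℝ) ^ a := by positivity
    calc (n:ℝ) ^ b = Real.exp (Real.log ((n:ℝ)^b)) := (Real.exp_log hnp).symm
      _ = Real.exp (Real.log ((m:ℝ)^a)) := by rw [h1]
      _ = (m:ℝ) ^ a := Real.exp_log hmp
  have keyN : n ^ b = m ^ a := by exact_mod_cast key
  set d := Nat.gcd a b with hd
  have hdpos : 0 < d := Nat.gcd_pos_of_pos_left _ hapos
  set a₁ := a / d with ha₁
  set b₁ := b / d with hb₁
  have ha₁pos : 0 < a₁ := Nat.div_pos (Nat.le_of_dvd hapos (Nat.gcd_dvd_left a b)) hdpos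
  have hb₁pos : 0 < b₁ := Nat.div_pos (Nat.le_of_dvd hbpos (Nat.gcd_dvd_right a b)) hdpos
  have hcop : Nat.Coprime a₁ b₁ := Nat.coprime_div_gcd_div_gcd hdpos
  have keyN' : n ^ b₁ = m ^ a₁ := by
    have ha' : a = a₁ * d := (Nat.div_mul_cancel (Nat.gcd_dvd_left a b)).symm
    have hb' : b = b₁ * d := (Nat.div_mul_cancel (Nat.gcd_dvd_right a b)).symm
    have hdd : (n ^ b₁) ^ d = (m ^ a₁) ^ d := by
      rw [← pow_mul, ← pow_mul, ← ha', ← hb', keyN]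
    exact Nat.pow_left_injective hdpos.ne' hdd
  have keyQ : (n : ℚ≥0) ^ b₁ = (m : ℚ≥0) ^ a₁ := by exact_mod_cast keyN'
  obtain ⟨c, hc1, hc2⟩ := (pow_eq_pow_iff_of_coprime hcop.symm).mp keyQ
  have hden : c.den = 1 := by
    have hden' : c.den ^ a₁ = 1 := by
      have := congrArg NNRat.den hc1.symm
      rwa [NNRat.den_pow, NNRat.den_natCast] at this
    exact (pow_eq_one_iff.mp hden').resolve_right ha₁pos.ne'
  obtain ⟨k, hk⟩ : ∃ k : ℕ, c = (k : ℚ≥0) := by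
    refine ⟨c.num, ?_⟩
    conv_lhs => rw [← NNRat.num_div_den c]
    rw [hden]
    simp
  have hnn : n = k ^ a₁ := by
    have hx : (n : ℚ≥0) = (k : ℚ≥0) ^ a₁ := by rw [hc1, hk]
    exact_mod_cast hx
  have hmm : m = k ^ b₁ := by
    have hx : (m : ℚ≥0) = (k : ℚ≥0) ^ b₁ := by rw [hc2, hk]
    exact_mod_cast hx
  refine ⟨k, ?_, a₁, b₁, hnn, hmm⟩
  by_contra hlt
  push_neg at hlt
  have hle : k ^ a₁ ≤ 1 ^ a₁ := Nat.pow_le_pow_left (by omega) _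
  simp at hle
  omega
end

section
/- If log(n_i)/log(m_{j_i}) is rational, then 𝒟_{n_i} = 𝒟_{m_{j_i}}; consequently, if for every i there exists j with log(n_i)/log(m_j) rational, then ⋃_i 𝒟_{n_i} ⊆ ⋃_j 𝒟_{m_j}. -/
open MeasureTheory

noncomputable def cell (n : ℕ) (L p : ℤ) : Set ℝ :=
  Set.Ico ((p : ℝ) / (n : ℝ) ^ L) (((p : ℝ) + 1) / (n : ℝ) ^ L)

lemma cell_pow (n a : ℕ) (L p : ℤ) : cell (n ^ a) L p = cell n (a * L) p := by
  have h : ((n ^ a : ℕ) : ℝ) ^ L = (n : ℝ) ^ ((a : ℤ) * L) := by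
    push_cast
    rw [← zpow_natCast (n : ℝ) a, ← zpow_mul]
  unfold cell
  rw [h]

lemma cell_partition (n : ℕ) (hn : 1 ≤ n) (L p : ℤ) :
    cell n L p = ⋃ j ∈ Finset.range n, cell n (L + 1) (p * n + j) := by
  have hnR : (0:ℝ) < (n:ℝ) := by exact_mod_cast hn
  have hpow : (0:ℝ) < (n:ℝ) ^ L := zpow_pos hnR L
  have hpow1 : (0:ℝ) < (n:ℝ) ^ (L+1) := zpow_pos hnR (L+1)
  have hsplit : (n:ℝ) ^ (L+1) = (n:ℝ) ^ L * n := by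
    rw [zpow_add_one₀ (ne_of_gt hnR)]
  ext x
  simp only [Set.mem_iUnion, Finset.mem_range, cell, Set.mem_Ico, exists_prop]
  constructor
  · rintro ⟨h1, h2⟩
    set y := x * (n:ℝ) ^ (L+1) with hy
    have hyl : ((p * n : ℤ) : ℝ) ≤ y := by
      have : (p:ℝ) ≤ x * (n:ℝ)^L := (div_le_iff₀ hpow).mp h1
      push_cast
      calc (p:ℝ) * n ≤ x * (n:ℝ)^L * n := by nlinarith
        _ = y := by rw [hy, hsplit]; ring
    have hyu : y < ((p * n + n : ℤ) : ℝ) := by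
      have : x * (n:ℝ)^L < (p:ℝ) + 1 := (lt_div_iff₀ hpow).mp h2
      push_cast
      calc y = x * (n:ℝ)^L * n := by rw [hy, hsplit]; ring
        _ < ((p:ℝ) + 1) * n := by nlinarith
        _ = (p:ℝ) * n + n := by ring
    have hFl : p * n ≤ ⌊y⌋ := Int.le_floor.mpr hyl
    have hFu : ⌊y⌋ < p * n + n := Int.floor_lt.mpr hyu
    refine ⟨(⌊y⌋ - p * n).toNat, ?_, ?_, ?_⟩
    · omega
    · have hid : p * n + ((⌊y⌋ - p * n).toNat : ℤ) = ⌊y⌋ := by omega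
      rw [hid]
      exact (div_le_iff₀ hpow1).mpr (Int.floor_le y)
    · have hid : p * n + ((⌊y⌋ - p * n).toNat : ℤ) + 1 = ⌊y⌋ + 1 := by omega
      have hidR : (p:ℝ) * n + ((⌊y⌋ - p * n).toNat : ℝ) + 1 = (⌊y⌋ : ℝ) + 1 := by
        exact_mod_cast congrArg (Int.cast : ℤ → ℝ) hid
      rw [lt_div_iff₀ hpow1]
      have hfl := Int.lt_floor_add_one y
      push_cast
      linarith [hfl]
  · rintro ⟨j, hj, h1, h2⟩
    have hj' : ((j:ℝ)) ≤ (n:ℝ) - 1 := by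
      have : (j:ℝ) + 1 ≤ (n:ℝ) := by exact_mod_cast hj
      linarith
    constructor
    · calc (p:ℝ) / (n:ℝ)^L = ((p:ℝ) * n) / (n:ℝ)^(L+1) := by
            rw [hsplit]; field_simp
        _ ≤ ((p * n + j : ℤ) : ℝ) / (n:ℝ)^(L+1) := by
            push_cast
            have : (0:ℝ) ≤ (j:ℝ) := by positivity
            gcongr <;> linarith
        _ ≤ x := h1
    · calc x < (((p * n + j : ℤ) : ℝ) + 1) / (n:ℝ)^(L+1) := h2
        _ ≤ ((p:ℝ) + 1) / (n:ℝ)^L := by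
            rw [hsplit]
            rw [div_le_div_iff₀ (by positivity) hpow]
            push_cast
            nlinarith [mul_le_mul_of_nonneg_right
              (show (p:ℝ) * n + j + 1 ≤ ((p:ℝ) + 1) * n by linarith) hpow.le]

lemma cell_disjoint (n : ℕ) (hn : 1 ≤ n) (L : ℤ) {p q : ℤ} (h : p ≠ q) :
    Disjoint (cell n L p) (cell n L q) := by
  have hp : (0:ℝ) < (n:ℝ)^L := zpow_pos (by exact_mod_cast hn) L
  unfold cell
  rw [Set.Ico_disjoint_Ico]
  have hpq : (p:ℝ) + 1 ≤ (q:ℝ) ∨ (q:ℝ) + 1 ≤ (p:ℝ) := by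
    rcases lt_or_gt_of_ne h with hlt | hlt
    · left; exact_mod_cast hlt
    · right; exact_mod_cast hlt
  have hq' : (min ((p:ℝ)+1) ((q:ℝ)+1) : ℝ) ≤ max (p:ℝ) (q:ℝ) := by
    rcases hpq with h' | h'
    · exact le_trans (min_le_left _ _) (le_trans h' (le_max_right _ _))
    · exact le_trans (min_le_right _ _) (le_trans h' (le_max_left _ _))
  calc min (((p:ℝ)+1)/(n:ℝ)^L) (((q:ℝ)+1)/(n:ℝ)^L)
      = (min ((p:ℝ)+1) ((q:ℝ)+1)) / (n:ℝ)^L := by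
        rw [min_div_div_right hp.le]
    _ ≤ (max (p:ℝ) (q:ℝ)) / (n:ℝ)^L := by gcongr
    _ = max ((p:ℝ)/(n:ℝ)^L) ((q:ℝ)/(n:ℝ)^L) := by rw [max_div_div_right hp.le]

lemma cell_meas (n : ℕ) (L p : ℤ) : MeasurableSet (cell n L p) := measurableSet_Ico

lemma measure_cell_sum (n : ℕ) (hn : 1 ≤ n) (μ : Measure ℝ) (L p : ℤ) :
    μ (cell n L p) = ∑ j ∈ Finset.range n, μ (cell n (L + 1) (p * n + j)) := by
  rw [cell_partition n hn L p]
  rw [measure_biUnion_finset ?_ (fun j _ => cell_meas n _ _)]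
  intro i hi j hj hij
  exact cell_disjoint n hn _ (by simp only [ne_eq, add_right_inj]; exact_mod_cast hij)

lemma sum_range_mul' {M : Type*} [AddCommMonoid M] (f : ℕ → M) (a b : ℕ) :
    ∑ w ∈ Finset.range (a * b), f w
      = ∑ u ∈ Finset.range a, ∑ s ∈ Finset.range b, f (u * b + s) := by
  induction a with
  | zero => simp
  | succ a ih =>
    rw [Finset.sum_range_succ, ← ih, Nat.succ_mul, Finset.sum_range_add]

lemma measure_cell_sum_pow (n : ℕ) (hn : 1 ≤ n) (μ : Measure ℝ) (L p : ℤ) (d : ℕ) :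
    μ (cell n L p) = ∑ u ∈ Finset.range (n ^ d), μ (cell n (L + d) (p * n ^ d + u)) := by
  induction d generalizing L p with
  | zero => simp
  | succ d ih =>
    rw [ih]
    have step : ∀ u ∈ Finset.range (n ^ d),
        μ (cell n (L + d) (p * n ^ d + u))
          = ∑ s ∈ Finset.range n, μ (cell n (L + (d+1)) ((p * n ^ d + u) * n + s)) := by
      intro u _
      have := measure_cell_sum n hn μ (L + d) (p * n ^ d + u)
      rw [this]
      congr 1
      push_cast
      ring_nf
    rw [Finset.sum_congr rfl step]
    symm
    calc ∑ u ∈ Finset.range (n^(d+1)), μ (cell n (L + ((d+1:ℕ):ℤ)) (p * (n:ℤ)^(d+1) + (u:ℤ)))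
        = ∑ u ∈ Finset.range (n^d * n), μ (cell n (L + ((d+1:ℕ):ℤ)) (p * (n:ℤ)^(d+1) + (u:ℤ))) := by
          rw [pow_succ]
      _ = ∑ u ∈ Finset.range (n^d), ∑ s ∈ Finset.range n,
            μ (cell n (L + ((d+1:ℕ):ℤ)) (p * (n:ℤ)^(d+1) + ((u*n+s:ℕ):ℤ))) :=
          sum_range_mul' _ _ _
      _ = ∑ u ∈ Finset.range (n^d), ∑ s ∈ Finset.range n,
            μ (cell n (L + ((d:ℤ) + 1)) ((p * (n:ℤ)^d + (u:ℤ)) * (n:ℤ) + (s:ℤ))) := by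
          apply Finset.sum_congr rfl; intro u _; apply Finset.sum_congr rfl; intro s _
          congr 2 <;> push_cast <;> ring

lemma adicChild_eq_cell (n : ℕ) (hn : 1 ≤ n) (ℓ k : ℤ) (j : ℕ) :
    adicChild n ℓ k j = cell n (ℓ + 1) ((k - 1) * n + (j : ℤ) - 1) := by
  have hnR : (0:ℝ) < (n:ℝ) := by exact_mod_cast hn
  have h1 : (n:ℝ) ^ (ℓ+1) = (n:ℝ) ^ ℓ * n := by
    rw [zpow_add_one₀ hnR.ne']
  have hbase : ((k:ℝ) - 1) / (n:ℝ) ^ ℓ = (((k:ℝ) - 1) * n) / (n:ℝ) ^ (ℓ+1) := by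
    rw [h1, mul_div_mul_right _ _ hnR.ne']
  have e1 : ((k:ℝ) - 1) / (n:ℝ) ^ ℓ + ((j:ℝ) - 1) / (n:ℝ) ^ (ℓ + 1)
      = (((k - 1) * n + (j : ℤ) - 1 : ℤ) : ℝ) / (n:ℝ) ^ (ℓ+1) := by
    rw [hbase, ← add_div]
    congr 1
    push_cast
    ring
  have e2 : ((k:ℝ) - 1) / (n:ℝ) ^ ℓ + (j:ℝ) / (n:ℝ) ^ (ℓ + 1)
      = ((((k - 1) * n + (j : ℤ) - 1 : ℤ) : ℝ) + 1) / (n:ℝ) ^ (ℓ+1) := by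
    rw [hbase, ← add_div]
    congr 1
    push_cast
    ring
  unfold adicChild cell
  rw [e1, e2]

def DGP (n : ℕ) (μ : Measure ℝ) (C : ℝ) : Prop :=
  (∀ L p : ℤ, 0 < (μ (cell n L p)).toReal) ∧
  ∀ (L k j j' : ℤ), 0 ≤ j → j < n → 0 ≤ j' → j' < n →
    (μ (cell n L (k * n + j))).toReal ≤ C * (μ (cell n L (k * n + j'))).toReal

lemma cell_eq_adicChild (n : ℕ) (hn : 1 ≤ n) (L k j : ℤ) (hj0 : 0 ≤ j) :
    cell n L (k * n + j) = adicChild n (L - 1) (k + 1) (j.toNat + 1) := by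
  rw [adicChild_eq_cell n hn (L-1) (k+1) (j.toNat+1)]
  have h1 : L - 1 + 1 = L := by ring
  have h2 : (k + 1 - 1) * (n:ℤ) + ((j.toNat + 1 : ℕ) : ℤ) - 1 = k * n + j := by
    push_cast
    rw [Int.toNat_of_nonneg hj0]
    ring
  rw [h1, h2]

lemma isAdicDoubling_iff (n : ℕ) (hn : 1 ≤ n) (μ : Measure ℝ) :
    IsAdicDoubling n μ ↔ ∃ C : ℝ, 1 ≤ C ∧ DGP n μ C := by
  have hnZ : (0:ℤ) < (n:ℤ) := by exact_mod_cast hn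
  constructor
  · rintro ⟨C, hC, H⟩
    have key : ∀ L p : ℤ, ∃ k j : ℤ, 0 ≤ j ∧ j < n ∧ p = k * n + j := by
      intro L p
      refine ⟨p / n, p % n, Int.emod_nonneg p hnZ.ne', Int.emod_lt_of_pos p hnZ, ?_⟩
      linear_combination -Int.mul_ediv_add_emod p (n:ℤ)
    have hpos : ∀ L p : ℤ, 0 < (μ (cell n L p)).toReal := by
      intro L p
      obtain ⟨k, j, hj0, hjn, rfl⟩ := key L p
      rw [cell_eq_adicChild n hn L k j hj0]
      have hb1 : 1 ≤ j.toNat + 1 := by omega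
      have hb2 : j.toNat + 1 ≤ n := by omega
      obtain ⟨h1, -⟩ := H (L-1) (k+1) (j.toNat+1) (j.toNat+1) hb1 hb2 hb1 hb2
      rcases eq_or_lt_of_le
          (ENNReal.toReal_nonneg : 0 ≤ (μ (adicChild n (L-1) (k+1) (j.toNat+1))).toReal)
          with h0 | h0
      · exfalso
        rw [← h0] at h1
        simp at h1
        linarith [one_div_pos.mpr hC]
      · exact h0
    have hC1 : 1 ≤ C := by
      obtain ⟨-, h2⟩ := H 0 1 1 1 (le_refl 1) hn (le_refl 1) hn
      have hne : (μ (adicChild n 0 1 1)).toReal ≠ 0 := by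
        rw [adicChild_eq_cell n hn 0 1 1]
        exact (hpos _ _).ne'
      rwa [div_self hne] at h2
    refine ⟨C, hC1, hpos, ?_⟩
    intro L k j j' hj0 hjn hj0' hjn'
    have e1 := cell_eq_adicChild n hn L k j hj0
    have e2 := cell_eq_adicChild n hn L k j' hj0'
    rw [e1, e2]
    obtain ⟨-, h2⟩ := H (L-1) (k+1) (j.toNat+1) (j'.toNat+1) (by omega) (by omega)
      (by omega) (by omega)
    have hy : 0 < (μ (adicChild n (L-1) (k+1) (j'.toNat+1))).toReal := by
      rw [← cell_eq_adicChild n hn L k j' hj0']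
      exact hpos L (k * n + j')
    exact (div_le_iff₀ hy).mp h2
  · rintro ⟨C, hC1, hpos, hd⟩
    have hC : 0 < C := lt_of_lt_of_le one_pos hC1
    refine ⟨C, hC, ?_⟩
    intro ℓ k j₁ j₂ h11 h12 h21 h22
    have e1 := adicChild_eq_cell n hn ℓ k j₁
    have e2 := adicChild_eq_cell n hn ℓ k j₂
    have r1 : (k - 1) * (n:ℤ) + (j₁ : ℤ) - 1 = (k-1) * n + ((j₁ : ℤ) - 1) := by ring
    have r2 : (k - 1) * (n:ℤ) + (j₂ : ℤ) - 1 = (k-1) * n + ((j₂ : ℤ) - 1) := by ring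
    rw [e1, e2, r1, r2]
    have b1 : (0:ℤ) ≤ (j₁:ℤ) - 1 := by omega
    have b2 : (j₁:ℤ) - 1 < n := by omega
    have b3 : (0:ℤ) ≤ (j₂:ℤ) - 1 := by omega
    have b4 : (j₂:ℤ) - 1 < n := by omega
    have hx := hpos (ℓ+1) ((k-1) * n + ((j₁:ℤ) - 1))
    have hy := hpos (ℓ+1) ((k-1) * n + ((j₂:ℤ) - 1))
    have hxy := hd (ℓ+1) (k-1) _ _ b1 b2 b3 b4
    have hyx := hd (ℓ+1) (k-1) _ _ b3 b4 b1 b2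
    constructor
    · rw [div_le_div_iff₀ (by positivity) hy]
      linarith
    · rw [div_le_iff₀ hy]
      exact hxy

lemma cell_ne_top {n : ℕ} {μ : Measure ℝ}
    (hpos : ∀ L p : ℤ, 0 < (μ (cell n L p)).toReal) (L p : ℤ) :
    μ (cell n L p) ≠ ⊤ := by
  intro h
  have := hpos L p
  rw [h] at this
  simp at this

lemma toReal_cell_sum {n : ℕ} (hn : 1 ≤ n) {μ : Measure ℝ}
    (hpos : ∀ L p : ℤ, 0 < (μ (cell n L p)).toReal) (L p : ℤ) :
    (μ (cell n L p)).toReal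
      = ∑ j ∈ Finset.range n, (μ (cell n (L + 1) (p * n + j))).toReal := by
  rw [measure_cell_sum n hn μ L p, ENNReal.toReal_sum (fun j _ => cell_ne_top hpos _ _)]

lemma child_bounds {n : ℕ} (hn : 1 ≤ n) {μ : Measure ℝ} {C : ℝ}
    (hpos : ∀ L p : ℤ, 0 < (μ (cell n L p)).toReal)
    (hd : ∀ (L k j j' : ℤ), 0 ≤ j → j < n → 0 ≤ j' → j' < n →
      (μ (cell n L (k * n + j))).toReal ≤ C * (μ (cell n L (k * n + j'))).toReal)
    (L p s : ℤ) (hs0 : 0 ≤ s) (hsn : s < n) :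
    (μ (cell n (L + 1) (p * n + s))).toReal ≤ (μ (cell n L p)).toReal ∧
    (μ (cell n L p)).toReal ≤ ((n : ℝ) * C) * (μ (cell n (L + 1) (p * n + s))).toReal := by
  have hsum := toReal_cell_sum hn hpos L p
  have hs' : ((s.toNat : ℤ)) = s := Int.toNat_of_nonneg hs0
  constructor
  · rw [hsum, ← hs']
    have hmem : s.toNat ∈ Finset.range n := by
      simp only [Finset.mem_range]
      omega
    exact Finset.single_le_sum
      (f := fun j : ℕ => (μ (cell n (L + 1) (p * n + j))).toReal)
      (fun i _ => ENNReal.toReal_nonneg) hmem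
  · rw [hsum]
    calc ∑ j ∈ Finset.range n, (μ (cell n (L + 1) (p * n + j))).toReal
        ≤ ∑ _j ∈ Finset.range n, C * (μ (cell n (L + 1) (p * n + s))).toReal := by
          apply Finset.sum_le_sum
          intro j hj
          exact hd (L + 1) p j s (by positivity)
            (by exact_mod_cast Finset.mem_range.mp hj) hs0 hsn
      _ = ((n : ℝ) * C) * (μ (cell n (L + 1) (p * n + s))).toReal := by
          rw [Finset.sum_const, Finset.card_range]
          push_cast
          ring

lemma descend {n : ℕ} (hn : 1 ≤ n) {μ : Measure ℝ} {C : ℝ} (hC1 : 1 ≤ C)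
    (hpos : ∀ L p : ℤ, 0 < (μ (cell n L p)).toReal)
    (hd : ∀ (L k j j' : ℤ), 0 ≤ j → j < n → 0 ≤ j' → j' < n →
      (μ (cell n L (k * n + j))).toReal ≤ C * (μ (cell n L (k * n + j'))).toReal) :
    ∀ (a : ℕ) (L k t : ℤ), 0 ≤ t → t < (n:ℤ) ^ a →
      (μ (cell n (L + a) (k * (n:ℤ) ^ a + t))).toReal ≤ (μ (cell n L k)).toReal ∧
      (μ (cell n L k)).toReal
        ≤ ((n : ℝ) * C) ^ a * (μ (cell n (L + a) (k * (n:ℤ) ^ a + t))).toReal := by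
  have hC0 : (0:ℝ) ≤ C := le_trans zero_le_one hC1
  intro a
  induction a with
  | zero =>
    intro L k t ht0 htn
    have ht : t = 0 := by simp at htn; omega
    subst ht
    simp
  | succ a ih =>
    intro L k t ht0 htn
    have hnZ : (0:ℤ) < (n:ℤ) := by exact_mod_cast hn
    set u := t / (n:ℤ) with hu
    set s := t % (n:ℤ) with hs
    have hs0 : 0 ≤ s := Int.emod_nonneg t hnZ.ne'
    have hsn : s < n := Int.emod_lt_of_pos t hnZ
    have hu0 : 0 ≤ u := Int.ediv_nonneg ht0 hnZ.le
    have hun : u < (n:ℤ) ^ a := by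
      rw [hu]
      rw [Int.ediv_lt_iff_lt_mul hnZ]
      calc t < (n:ℤ) ^ (a+1) := htn
        _ = (n:ℤ) ^ a * n := by ring
    have heq : (n:ℤ) * u + s = t := Int.mul_ediv_add_emod t n
    have hL : L + ((a + 1 : ℕ) : ℤ) = (L + (a : ℕ)) + 1 := by push_cast; ring
    have hI : k * (n:ℤ) ^ (a + 1) + t = (k * (n:ℤ) ^ a + u) * n + s := by
      linear_combination -heq
    rw [hL, hI]
    obtain ⟨ih1, ih2⟩ := ih L k u hu0 hun
    obtain ⟨cb1, cb2⟩ := child_bounds hn hpos hd (L + (a:ℕ)) (k * (n:ℤ) ^ a + u) s hs0 hsn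
    constructor
    · exact le_trans cb1 ih1
    · calc (μ (cell n L k)).toReal
          ≤ ((n:ℝ) * C) ^ a * (μ (cell n (L + (a:ℕ)) (k * (n:ℤ) ^ a + u))).toReal := ih2
        _ ≤ ((n:ℝ) * C) ^ a * (((n:ℝ) * C) *
              (μ (cell n (L + (a:ℕ) + 1) ((k * (n:ℤ) ^ a + u) * n + s))).toReal) := by
            apply mul_le_mul_of_nonneg_left cb2
            exact pow_nonneg (mul_nonneg (Nat.cast_nonneg n) hC0) a
        _ = ((n:ℝ) * C) ^ (a + 1) *
              (μ (cell n (L + (a:ℕ) + 1) ((k * (n:ℤ) ^ a + u) * n + s))).toReal := by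
            ring

lemma dgp_pow_of_dgp {n : ℕ} (hn : 1 ≤ n) (a : ℕ) {μ : Measure ℝ} {C : ℝ} (hC1 : 1 ≤ C)
    (h : DGP n μ C) : DGP (n ^ a) μ (((n:ℝ) * C) ^ a) := by
  obtain ⟨hpos, hd⟩ := h
  have hcast : ((n ^ a : ℕ) : ℤ) = (n:ℤ) ^ a := by push_cast; ring
  constructor
  · intro L p
    rw [cell_pow]
    exact hpos _ _
  · intro L k j j' hj0 hjn hj0' hjn'
    rw [hcast] at hjn hjn'
    rw [cell_pow, cell_pow, hcast]
    have hlev : ((a:ℤ) * L - a) + (a:ℕ) = (a:ℤ) * L := by push_cast; ring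
    have h1 := descend hn hC1 hpos hd a ((a:ℤ) * L - a) k j hj0 hjn
    have h2 := descend hn hC1 hpos hd a ((a:ℤ) * L - a) k j' hj0' hjn'
    rw [hlev] at h1 h2
    exact le_trans h1.1 h2.2

lemma dgp_of_dgp_pow {n a : ℕ} (hn : 1 ≤ n) (ha : 1 ≤ a) {μ : Measure ℝ} {C : ℝ}
    (h : DGP (n ^ a) μ C) : DGP n μ C := by
  obtain ⟨hposM, hdM⟩ := h
  have hcast : ((n ^ a : ℕ) : ℤ) = (n:ℤ) ^ a := by push_cast; ring
  have hnZ : (0:ℤ) < (n:ℤ) := by exact_mod_cast hn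
  have haZ : (1:ℤ) ≤ (a:ℤ) := by exact_mod_cast ha
  -- positivity and finiteness of M-cells, expressed as n-cells at levels a*t
  have hposM' : ∀ t p : ℤ, 0 < (μ (cell n ((a:ℤ) * t) p)).toReal := by
    intro t p
    rw [← cell_pow]
    exact hposM t p
  have hfinM' : ∀ t p : ℤ, μ (cell n ((a:ℤ) * t) p) ≠ ⊤ := by
    intro t p
    rw [← cell_pow]
    exact cell_ne_top hposM t p
  have hdM' : ∀ (t k j j' : ℤ), 0 ≤ j → j < (n:ℤ)^a → 0 ≤ j' → j' < (n:ℤ)^a →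
      (μ (cell n ((a:ℤ)*t) (k * (n:ℤ)^a + j))).toReal
        ≤ C * (μ (cell n ((a:ℤ)*t) (k * (n:ℤ)^a + j'))).toReal := by
    intro t k j j' h1 h2 h3 h4
    have := hdM t k j j' h1 (by rwa [hcast]) h3 (by rwa [hcast])
    rwa [cell_pow, cell_pow, hcast] at this
  -- every n-cell sits at the bottom of some pile: pick a multiple of a above L
  have key : ∀ L : ℤ, ∃ (t : ℤ) (d : ℕ), L + (d:ℤ) = (a:ℤ) * t ∧ (d:ℤ) < a := by
    intro L
    refine ⟨-((-L) / a), ((-L) % a).toNat, ?_, ?_⟩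
    · have h1 := Int.mul_ediv_add_emod (-L) (a:ℤ)
      have h2 : 0 ≤ (-L) % a := Int.emod_nonneg _ (by omega)
      have h3 : ((((-L) % a).toNat : ℤ)) = (-L) % a := Int.toNat_of_nonneg h2
      rw [h3]
      linarith [h1]
    · have h4 : (-L) % a < a := Int.emod_lt_of_pos _ (by omega)
      have h2 : 0 ≤ (-L) % a := Int.emod_nonneg _ (by omega)
      omega
  -- positivity of all n-cells
  have hpos : ∀ L p : ℤ, 0 < (μ (cell n L p)).toReal := by
    intro L p
    obtain ⟨t, d, hLd, -⟩ := key L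
    rw [measure_cell_sum_pow n hn μ L p d]
    apply ENNReal.toReal_pos
    · intro h0
      rw [Finset.sum_eq_zero_iff] at h0
      have hmem : 0 ∈ Finset.range (n ^ d) := by
        simp only [Finset.mem_range]
        positivity
      have := h0 0 hmem
      rw [hLd] at this
      exact absurd this (fun hh => (hposM' t _).ne' (by rw [hh]; simp))
    · rw [ENNReal.sum_ne_top]
      intro u _
      rw [hLd]
      exact hfinM' t _
  refine ⟨hpos, ?_⟩
  intro L k j j' hj0 hjn hj0' hjn'
  obtain ⟨t, d, hLd, hda⟩ := key L
  have hd0 : (0:ℤ) ≤ (d:ℤ) := by positivity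
  -- e := a - 1 - d
  set e : ℕ := a - 1 - d with he
  have hade : a = e + d + 1 := by omega
  set K : ℤ := k / (n:ℤ)^e with hK
  set w : ℤ := k % (n:ℤ)^e with hw
  have hpe : (0:ℤ) < (n:ℤ)^e := by positivity
  have hw0 : 0 ≤ w := Int.emod_nonneg _ hpe.ne'
  have hwn : w < (n:ℤ)^e := Int.emod_lt_of_pos _ hpe
  have hk : (n:ℤ)^e * K + w = k := Int.mul_ediv_add_emod k ((n:ℤ)^e)
  have hpa : (n:ℤ)^a = (n:ℤ)^e * ((n:ℤ)^d * n) := by rw [hade]; ring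
  -- the representation of descendants as children of the common M-parent
  have hrep : ∀ (j u : ℤ), (k * n + j) * (n:ℤ)^d + u
      = K * (n:ℤ)^a + (w * ((n:ℤ)^d * n) + j * (n:ℤ)^d + u) := by
    intro j u
    rw [hpa]
    linear_combination (-((n:ℤ)^d * n)) * hk
  have hvbound : ∀ (j u : ℤ), 0 ≤ j → j < n → 0 ≤ u → u < (n:ℤ)^d →
      0 ≤ w * ((n:ℤ)^d * n) + j * (n:ℤ)^d + u ∧
      w * ((n:ℤ)^d * n) + j * (n:ℤ)^d + u < (n:ℤ)^a := by
    intro j u hj0 hjn hu0 hun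
    have hpd : (0:ℤ) < (n:ℤ)^d := by positivity
    constructor
    · positivity
    · rw [hpa]
      nlinarith [mul_le_mul_of_nonneg_right (show w ≤ (n:ℤ)^e - 1 by omega)
          (mul_nonneg hpd.le hnZ.le),
        mul_le_mul_of_nonneg_right (show j ≤ (n:ℤ) - 1 by omega) hpd.le]
  -- decompose both children into M-cells and compare termwise
  have hsum : ∀ jj : ℤ, (μ (cell n L (k * n + jj))).toReal
      = ∑ u ∈ Finset.range (n ^ d),
          (μ (cell n (L + d) ((k * n + jj) * (n:ℤ)^d + u))).toReal := by
    intro jj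
    rw [measure_cell_sum_pow n hn μ L (k * n + jj) d]
    apply ENNReal.toReal_sum
    intro u _
    rw [hLd]
    exact hfinM' t _
  rw [hsum j, hsum j']
  have hterm : ∀ u : ℕ, u ∈ Finset.range (n ^ d) →
      (μ (cell n (L + d) ((k * n + j) * (n:ℤ)^d + u))).toReal
        ≤ C * (μ (cell n (L + d) ((k * n + j') * (n:ℤ)^d + u))).toReal := by
    intro u hu
    have huZ : (0:ℤ) ≤ (u:ℤ) := by positivity
    have hunZ : ((u:ℤ)) < (n:ℤ)^d := by
      have := Finset.mem_range.mp hu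
      exact_mod_cast this
    obtain ⟨hv0, hv1⟩ := hvbound j u hj0 hjn huZ hunZ
    obtain ⟨hv0', hv1'⟩ := hvbound j' u hj0' hjn' huZ hunZ
    have := hdM' t K _ _ hv0 hv1 hv0' hv1'
    rw [← hLd, ← hrep j u, ← hrep j' u] at this
    exact this
  calc ∑ u ∈ Finset.range (n ^ d),
        (μ (cell n (L + d) ((k * n + j) * (n:ℤ)^d + u))).toReal
      ≤ ∑ u ∈ Finset.range (n ^ d),
        C * (μ (cell n (L + d) ((k * n + j') * (n:ℤ)^d + u))).toReal :=
        Finset.sum_le_sum hterm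
    _ = C * ∑ u ∈ Finset.range (n ^ d),
        (μ (cell n (L + d) ((k * n + j') * (n:ℤ)^d + u))).toReal := by
        rw [Finset.mul_sum]

lemma isAdicDoubling_pow (n a : ℕ) (hn : 2 ≤ n) (ha : 1 ≤ a) (μ : Measure ℝ) :
    IsAdicDoubling n μ ↔ IsAdicDoubling (n ^ a) μ := by
  have h1 : 1 ≤ n := by omega
  have h1a : 1 ≤ n ^ a := Nat.one_le_pow a n (by omega)
  rw [isAdicDoubling_iff n h1, isAdicDoubling_iff (n ^ a) h1a]
  constructor
  · rintro ⟨C, hC1, h⟩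
    refine ⟨((n:ℝ) * C) ^ a, ?_, dgp_pow_of_dgp h1 a hC1 h⟩
    have hnC : (1:ℝ) ≤ (n:ℝ) * C := by
      have : (1:ℝ) ≤ (n:ℝ) := by exact_mod_cast h1
      nlinarith
    exact one_le_pow₀ hnC
  · rintro ⟨C, hC1, h⟩
    exact ⟨C, hC1, dgp_of_dgp_pow h1 ha h⟩

lemma exists_common_pow (n m : ℕ) (hn : 2 ≤ n) (hm : 2 ≤ m) (q : ℚ)
    (h : Real.log n / Real.log m = (q : ℝ)) :
    ∃ p r : ℕ, 1 ≤ p ∧ 1 ≤ r ∧ n ^ p = m ^ r := by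
  have hnR : (1:ℝ) < n := by exact_mod_cast hn
  have hmR : (1:ℝ) < m := by exact_mod_cast hm
  have hln : 0 < Real.log n := Real.log_pos hnR
  have hlm : 0 < Real.log m := Real.log_pos hmR
  have hq : Real.log n = (q:ℝ) * Real.log m := by
    rw [← h]
    field_simp
  have hqpos : (0:ℝ) < (q:ℝ) := by
    rw [← h]
    positivity
  have hqQ : (0:ℚ) < q := by exact_mod_cast hqpos
  have hnum : 0 < q.num := Rat.num_pos.mpr hqQ
  refine ⟨q.den, q.num.toNat, q.pos, by omega, ?_⟩
  have hr : ((q.num.toNat : ℤ)) = q.num := Int.toNat_of_nonneg hnum.le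
  have hden : ((q.den:ℝ)) ≠ 0 := by
    have := q.pos
    positivity
  have hcast : ((q.den:ℝ)) * (q:ℝ) = ((q.num:ℤ):ℝ) := by
    rw [Rat.cast_def]
    field_simp
  have e1 : Real.log ((n:ℝ) ^ q.den) = Real.log ((m:ℝ) ^ q.num.toNat) := by
    rw [Real.log_pow, Real.log_pow]
    have : ((q.num.toNat : ℝ)) = ((q.num:ℤ):ℝ) := by exact_mod_cast hr
    rw [this, ← hcast, hq]
    ring
  have e2 : ((n:ℝ)) ^ q.den = ((m:ℝ)) ^ q.num.toNat := by
    have p1 : (0:ℝ) < (n:ℝ) ^ q.den := by positivity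
    have p2 : (0:ℝ) < (m:ℝ) ^ q.num.toNat := by positivity
    rw [← Real.exp_log p1, ← Real.exp_log p2, e1]
  exact_mod_cast e2

/-- If `log nᵢ / log m_{jᵢ}` is rational then `𝒟_{nᵢ} = 𝒟_{m_{jᵢ}}`; consequently, if for
every `i` there exists `j` with `log nᵢ / log m_j` rational, then
`⋃ᵢ 𝒟_{nᵢ} ⊆ ⋃ⱼ 𝒟_{m_j}`. -/
theorem stmt9 (n m : ℕ → ℕ) (hn : ∀ i, 2 ≤ n i) (hm : ∀ j, 2 ≤ m j) :
    (∀ i j, (∃ q : ℚ, Real.log (n i) / Real.log (m j) = (q : ℝ)) →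
      {μ : Measure ℝ | IsAdicDoubling (n i) μ} = {μ : Measure ℝ | IsAdicDoubling (m j) μ}) ∧
    ((∀ i : ℕ, ∃ j : ℕ, ∃ q : ℚ, Real.log (n i) / Real.log (m j) = (q : ℝ)) →
      (⋃ i : ℕ, {μ : Measure ℝ | IsAdicDoubling (n i) μ}) ⊆
        ⋃ j : ℕ, {μ : Measure ℝ | IsAdicDoubling (m j) μ}) := by
  have part1 : ∀ i j, (∃ q : ℚ, Real.log (n i) / Real.log (m j) = (q : ℝ)) →
      {μ : Measure ℝ | IsAdicDoubling (n i) μ} = {μ : Measure ℝ | IsAdicDoubling (m j) μ} := by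
    rintro i j ⟨q, hq⟩
    obtain ⟨p, r, hp, hr, hpr⟩ := exists_common_pow (n i) (m j) (hn i) (hm j) q hq
    ext μ
    simp only [Set.mem_setOf_eq]
    rw [isAdicDoubling_pow (n i) p (hn i) hp μ, hpr,
      ← isAdicDoubling_pow (m j) r (hm j) hr μ]
  refine ⟨part1, ?_⟩
  intro hall μ hμ
  rw [Set.mem_iUnion] at hμ
  obtain ⟨i, hi⟩ := hμ
  obtain ⟨j, q, hq⟩ := hall i
  rw [Set.mem_iUnion]
  refine ⟨j, ?_⟩
  rw [← part1 i j ⟨q, hq⟩]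
  exact hi
end

section
/- The measure μ of the construction is not doubling: for each ℓ ≥ 1, the interval [ℓ - 1/n^{ℓ+1}, ℓ + 1/n^{ℓ+1}) has left half of μ-measure b^ℓ/n^{ℓ+1} and right half of μ-measure a^{ℓ+1}/n^{ℓ+1}, and the ratio b^ℓ/a^{ℓ+1} → ∞ as ℓ → ∞. -/
open MeasureTheory
open scoped Classical

/-- The density of the constructed measure. For `x < 0` it is `1` (Lebesgue). For `x ≥ 0`
with `x ∈ [ℓ, ℓ+1)`, `ℓ ∈ ℕ`, the redistribution (multiplying the density by `a` on the
leftmost `n`-adic child and by `b` on the rightmost `n`-adic child of every previously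
modified interval) is iterated `ℓ + 1` times: in terms of the base-`n` digits
`d_i = ⌊(x - ℓ)·n^(i+1)⌋ mod n` of the fractional part, the density is the product over
`i < ℓ + 1` of `a` (if `d_i = 0`), `b` (if `d_i = n-1`) as long as all previous digits lie
in `{0, n-1}`, and `1` otherwise. -/
noncomputable def constrDens (n : ℕ) (a b : ℝ) (x : ℝ) : ℝ :=
  if x < 0 then 1 else
    ∏ i ∈ Finset.range (⌊x⌋.toNat + 1),
      if ∀ j < i, (⌊Int.fract x * (n : ℝ) ^ (j + 1)⌋ % n = 0 ∨
          ⌊Int.fract x * (n : ℝ) ^ (j + 1)⌋ % n = (n : ℤ) - 1)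
      then (if ⌊Int.fract x * (n : ℝ) ^ (i + 1)⌋ % n = 0 then a
            else if ⌊Int.fract x * (n : ℝ) ^ (i + 1)⌋ % n = (n : ℤ) - 1 then b else 1)
      else 1

/-- The constructed measure: Lebesgue measure on `(-∞, 0)`, with the redistributed weights
on `[0, ∞)`. -/
noncomputable def constrMeasure (n : ℕ) (a b : ℝ) : Measure ℝ :=
  volume.withDensity fun x => ENNReal.ofReal (constrDens n a b x)

lemma emod_pow_sub_one (n : ℕ) (hn : 2 ≤ n) (j : ℕ) :
    ((n : ℤ) ^ (j + 1) - 1) % n = (n : ℤ) - 1 := by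
  obtain ⟨c, hc⟩ : ((n : ℤ)) ∣ (n : ℤ) ^ (j + 1) := dvd_pow_self _ (Nat.succ_ne_zero j)
  have h2 : (2 : ℤ) ≤ n := by exact_mod_cast hn
  have he : (n : ℤ) ^ (j + 1) - 1 = ((n : ℤ) - 1) + (n : ℤ) * (c - 1) := by rw [hc]; ring
  rw [he, Int.add_mul_emod_self_left, Int.emod_eq_of_lt (by omega) (by omega)]

lemma densLeft (n : ℕ) (hn : 2 ≤ n) (a b : ℝ) (ℓ : ℕ) (hℓ : 1 ≤ ℓ)
    (x : ℝ) (hx1 : (ℓ : ℝ) - 1 / (n : ℝ) ^ (ℓ + 1) ≤ x) (hx2 : x < ℓ) :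
    constrDens n a b x = b ^ ℓ := by
  have hn1 : (1 : ℝ) < n := by exact_mod_cast (by omega : 1 < n)
  have hnp : ∀ k : ℕ, (0 : ℝ) < (n : ℝ) ^ k := fun k => pow_pos (by linarith) k
  have hinv1 : 1 / (n : ℝ) ^ (ℓ + 1) ≤ 1 := by
    rw [div_le_one (hnp _)]; exact one_le_pow₀ hn1.le
  have hℓ1 : (1 : ℝ) ≤ ℓ := by exact_mod_cast hℓ
  have hx0 : (0 : ℝ) ≤ x := by linarith
  have hfloor : ⌊x⌋ = (ℓ : ℤ) - 1 := by
    rw [Int.floor_eq_iff]; push_cast; constructor <;> linarith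
  have hfract : Int.fract x = x - ((ℓ : ℝ) - 1) := by
    rw [Int.fract, hfloor]; push_cast; ring
  have hfr_lb : 1 - 1 / (n : ℝ) ^ (ℓ + 1) ≤ Int.fract x := by rw [hfract]; linarith
  have hfr_ub : Int.fract x < 1 := by rw [hfract]; linarith
  have digit : ∀ j < ℓ, ⌊Int.fract x * (n : ℝ) ^ (j + 1)⌋ = (n : ℤ) ^ (j + 1) - 1 := by
    intro j hj
    have hple : (n : ℝ) ^ (j + 1) ≤ (n : ℝ) ^ (ℓ + 1) := pow_le_pow_right₀ hn1.le (by omega)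
    have hdiv : (n : ℝ) ^ (j + 1) * (1 / (n : ℝ) ^ (ℓ + 1)) ≤ 1 := by
      rw [mul_one_div, div_le_one (hnp _)]; exact hple
    rw [Int.floor_eq_iff]
    push_cast
    constructor
    · have h1 : (1 - 1 / (n : ℝ) ^ (ℓ + 1)) * (n : ℝ) ^ (j + 1) ≤
          Int.fract x * (n : ℝ) ^ (j + 1) :=
        mul_le_mul_of_nonneg_right hfr_lb (hnp _).le
      nlinarith [hdiv]
    · have := mul_lt_mul_of_pos_right hfr_ub (hnp (j + 1))
      linarith
  have hx0' : ¬ x < 0 := not_lt.mpr hx0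
  rw [constrDens, if_neg hx0']
  have htn : ⌊x⌋.toNat + 1 = ℓ := by rw [hfloor]; omega
  rw [htn]
  have h2 : (2 : ℤ) ≤ n := by exact_mod_cast hn
  have hterm : ∀ i ∈ Finset.range ℓ,
      (if ∀ j < i, (⌊Int.fract x * (n : ℝ) ^ (j + 1)⌋ % n = 0 ∨
          ⌊Int.fract x * (n : ℝ) ^ (j + 1)⌋ % n = (n : ℤ) - 1)
      then (if ⌊Int.fract x * (n : ℝ) ^ (i + 1)⌋ % n = 0 then a
            else if ⌊Int.fract x * (n : ℝ) ^ (i + 1)⌋ % n = (n : ℤ) - 1 then b else 1)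
      else 1) = b := by
    intro i hi
    rw [Finset.mem_range] at hi
    have hB : ⌊Int.fract x * (n : ℝ) ^ (i + 1)⌋ % n = (n : ℤ) - 1 := by
      rw [digit i hi]; exact emod_pow_sub_one n hn i
    have hA : ¬ (⌊Int.fract x * (n : ℝ) ^ (i + 1)⌋ % n = 0) := by rw [hB]; omega
    have hcond : ∀ j < i, (⌊Int.fract x * (n : ℝ) ^ (j + 1)⌋ % n = 0 ∨
        ⌊Int.fract x * (n : ℝ) ^ (j + 1)⌋ % n = (n : ℤ) - 1) := by
      intro j hj
      right
      rw [digit j (hj.trans hi)]; exact emod_pow_sub_one n hn j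
    rw [if_pos hcond, if_neg hA, if_pos hB]
  rw [Finset.prod_congr rfl hterm, Finset.prod_const, Finset.card_range]

lemma densRight (n : ℕ) (hn : 2 ≤ n) (a b : ℝ) (ℓ : ℕ)
    (x : ℝ) (hx1 : (ℓ : ℝ) ≤ x) (hx2 : x < (ℓ : ℝ) + 1 / (n : ℝ) ^ (ℓ + 1)) :
    constrDens n a b x = a ^ (ℓ + 1) := by
  have hn1 : (1 : ℝ) < n := by exact_mod_cast (by omega : 1 < n)
  have hnp : ∀ k : ℕ, (0 : ℝ) < (n : ℝ) ^ k := fun k => pow_pos (by linarith) k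
  have hinv1 : 1 / (n : ℝ) ^ (ℓ + 1) ≤ 1 := by
    rw [div_le_one (hnp _)]; exact one_le_pow₀ hn1.le
  have hx0 : (0 : ℝ) ≤ x := le_trans (by positivity) hx1
  have hfloor : ⌊x⌋ = (ℓ : ℤ) := by
    rw [Int.floor_eq_iff]; push_cast; constructor <;> linarith
  have hfract : Int.fract x = x - (ℓ : ℝ) := by rw [Int.fract, hfloor]; norm_num
  have hfr_lb : 0 ≤ Int.fract x := Int.fract_nonneg x
  have hfr_ub : Int.fract x < 1 / (n : ℝ) ^ (ℓ + 1) := by rw [hfract]; linarith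
  have digit : ∀ j < ℓ + 1, ⌊Int.fract x * (n : ℝ) ^ (j + 1)⌋ = 0 := by
    intro j hj
    have hple : (n : ℝ) ^ (j + 1) ≤ (n : ℝ) ^ (ℓ + 1) := pow_le_pow_right₀ hn1.le (by omega)
    rw [Int.floor_eq_zero_iff]
    constructor
    · exact mul_nonneg hfr_lb (hnp _).le
    · have h1 : Int.fract x * (n : ℝ) ^ (j + 1) <
          (1 / (n : ℝ) ^ (ℓ + 1)) * (n : ℝ) ^ (j + 1) :=
        mul_lt_mul_of_pos_right hfr_ub (hnp _)
      have h2 : (1 / (n : ℝ) ^ (ℓ + 1)) * (n : ℝ) ^ (j + 1) ≤ 1 := by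
        rw [one_div, inv_mul_le_iff₀ (hnp _), mul_one]; exact hple
      exact lt_of_lt_of_le h1 h2
  have hx0' : ¬ x < 0 := not_lt.mpr hx0
  rw [constrDens, if_neg hx0']
  have htn : ⌊x⌋.toNat + 1 = ℓ + 1 := by rw [hfloor]; omega
  rw [htn]
  have hterm : ∀ i ∈ Finset.range (ℓ + 1),
      (if ∀ j < i, (⌊Int.fract x * (n : ℝ) ^ (j + 1)⌋ % n = 0 ∨
          ⌊Int.fract x * (n : ℝ) ^ (j + 1)⌋ % n = (n : ℤ) - 1)
      then (if ⌊Int.fract x * (n : ℝ) ^ (i + 1)⌋ % n = 0 then a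
            else if ⌊Int.fract x * (n : ℝ) ^ (i + 1)⌋ % n = (n : ℤ) - 1 then b else 1)
      else 1) = a := by
    intro i hi
    rw [Finset.mem_range] at hi
    have hA : ⌊Int.fract x * (n : ℝ) ^ (i + 1)⌋ % n = 0 := by
      rw [digit i hi]; exact Int.zero_emod _
    have hcond : ∀ j < i, (⌊Int.fract x * (n : ℝ) ^ (j + 1)⌋ % n = 0 ∨
        ⌊Int.fract x * (n : ℝ) ^ (j + 1)⌋ % n = (n : ℤ) - 1) := by
      intro j hj
      left
      rw [digit j (hj.trans hi)]; exact Int.zero_emod _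
    rw [if_pos hcond, if_pos hA]
  rw [Finset.prod_congr rfl hterm, Finset.prod_const, Finset.card_range]

lemma measureIcoConst (n : ℕ) (a b : ℝ) (c d : ℝ) (ρ : ℝ)
    (h : ∀ x ∈ Set.Ico c d, constrDens n a b x = ρ) :
    constrMeasure n a b (Set.Ico c d) = ENNReal.ofReal ρ * ENNReal.ofReal (d - c) := by
  rw [constrMeasure, withDensity_apply _ measurableSet_Ico,
    setLIntegral_congr_fun measurableSet_Ico
      (fun x hx => by rw [h x hx]),
    setLIntegral_const, Real.volume_Ico]

/-- The constructed measure `μ` is not doubling: for each `ℓ ≥ 1` the interval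
`[ℓ - 1/n^(ℓ+1), ℓ + 1/n^(ℓ+1))` has left half of `μ`-measure `b^ℓ/n^(ℓ+1)` and right half
of `μ`-measure `a^(ℓ+1)/n^(ℓ+1)`, and `b^ℓ/a^(ℓ+1) → ∞` as `ℓ → ∞`; in particular there is
no constant `C` with `μ(2I) ≤ C·μ(I)` for all intervals `I`. -/
theorem stmt12 (n : ℕ) (hn : 2 ≤ n) (a b : ℝ) (hab : a + b = 2)
    (ha : 0 < a) (ha1 : a < 1) (hb1 : 1 < b) :
    (∀ ℓ : ℕ, 1 ≤ ℓ →
      constrMeasure n a b (Set.Ico ((ℓ : ℝ) - 1 / (n : ℝ) ^ (ℓ + 1)) (ℓ : ℝ)) =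
        ENNReal.ofReal (b ^ ℓ / (n : ℝ) ^ (ℓ + 1)) ∧
      constrMeasure n a b (Set.Ico (ℓ : ℝ) ((ℓ : ℝ) + 1 / (n : ℝ) ^ (ℓ + 1))) =
        ENNReal.ofReal (a ^ (ℓ + 1) / (n : ℝ) ^ (ℓ + 1))) ∧
    Filter.Tendsto (fun ℓ : ℕ => b ^ ℓ / a ^ (ℓ + 1)) Filter.atTop Filter.atTop ∧
    ¬ ∃ C : ℝ, 0 < C ∧ ∀ x r : ℝ, 0 < r →
      constrMeasure n a b (Set.Ico (x - 2 * r) (x + 2 * r)) ≤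
        ENNReal.ofReal C * constrMeasure n a b (Set.Ico (x - r) (x + r)) := by
  have hb0 : (0 : ℝ) < b := lt_trans one_pos hb1
  have hT : Filter.Tendsto (fun ℓ : ℕ => b ^ ℓ / a ^ (ℓ + 1)) Filter.atTop Filter.atTop := by
    have hba : 1 < b / a := (one_lt_div ha).mpr (ha1.trans hb1)
    have heq : (fun ℓ : ℕ => b ^ ℓ / a ^ (ℓ + 1)) = fun ℓ : ℕ => (b / a) ^ ℓ * a⁻¹ := by
      funext ℓ
      rw [div_pow, pow_succ]
      field_simp
    rw [heq]
    exact (tendsto_pow_atTop_atTop_of_one_lt hba).atTop_mul_const (inv_pos.mpr ha)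
  refine ⟨?_, hT, ?_⟩
  · intro ℓ hℓ
    constructor
    · rw [measureIcoConst n a b _ _ (b ^ ℓ)
        (fun x hx => densLeft n hn a b ℓ hℓ x hx.1 hx.2),
        ← ENNReal.ofReal_mul (pow_pos hb0 ℓ).le]
      congr 1; ring
    · rw [measureIcoConst n a b _ _ (a ^ (ℓ + 1))
        (fun x hx => densRight n hn a b ℓ x hx.1 hx.2),
        ← ENNReal.ofReal_mul (pow_pos ha _).le]
      congr 1; ring
  · rintro ⟨C, hC, hd⟩
    obtain ⟨ℓ, hℓgt, hℓ1⟩ :=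
      ((hT.eventually_gt_atTop (2 * C)).and (Filter.eventually_ge_atTop 1)).exists
    have hn0 : (0 : ℝ) < n := by exact_mod_cast (by omega : 0 < n)
    set N := (n : ℝ) ^ (ℓ + 1) with hN
    have hNpos : 0 < N := pow_pos hn0 _
    set r := 1 / (2 * N) with hr
    have hrpos : 0 < r := by rw [hr]; positivity
    have key := hd ((ℓ : ℝ) + r) r hrpos
    have h1 : ((ℓ : ℝ) + r) - r = (ℓ : ℝ) := by ring
    have h2 : ((ℓ : ℝ) + r) + r = (ℓ : ℝ) + 1 / N := by rw [hr]; ring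
    have hI : constrMeasure n a b (Set.Ico (((ℓ : ℝ) + r) - r) (((ℓ : ℝ) + r) + r)) =
        ENNReal.ofReal (a ^ (ℓ + 1) * (1 / N)) := by
      rw [h1, h2, measureIcoConst n a b _ _ (a ^ (ℓ + 1))
        (fun x hx => densRight n hn a b ℓ x hx.1 hx.2),
        ← ENNReal.ofReal_mul (pow_pos ha _).le]
      congr 1; ring
    have hrN : r ≤ 1 / N := by
      rw [hr]
      apply one_div_le_one_div_of_le hNpos
      linarith
    have hsub : Set.Ico ((ℓ : ℝ) - r) (ℓ : ℝ) ⊆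
        Set.Ico (((ℓ : ℝ) + r) - 2 * r) (((ℓ : ℝ) + r) + 2 * r) :=
      Set.Ico_subset_Ico (by linarith) (by linarith)
    have h2I : ENNReal.ofReal (b ^ ℓ * r) ≤
        constrMeasure n a b (Set.Ico (((ℓ : ℝ) + r) - 2 * r) (((ℓ : ℝ) + r) + 2 * r)) := by
      have hdens : ∀ x ∈ Set.Ico ((ℓ : ℝ) - r) (ℓ : ℝ), constrDens n a b x = b ^ ℓ :=
        fun x hx => densLeft n hn a b ℓ hℓ1 x (by linarith [hx.1]) hx.2
      calc ENNReal.ofReal (b ^ ℓ * r)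
          = constrMeasure n a b (Set.Ico ((ℓ : ℝ) - r) (ℓ : ℝ)) := by
            rw [measureIcoConst n a b _ _ (b ^ ℓ) hdens,
              ← ENNReal.ofReal_mul (pow_pos hb0 ℓ).le]
            congr 1; ring
        _ ≤ _ := measure_mono hsub
    have hle : ENNReal.ofReal (b ^ ℓ * r) ≤
        ENNReal.ofReal (C * (a ^ (ℓ + 1) * (1 / N))) := by
      calc ENNReal.ofReal (b ^ ℓ * r) ≤ _ := h2I
        _ ≤ ENNReal.ofReal C * ENNReal.ofReal (a ^ (ℓ + 1) * (1 / N)) := by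
            rw [← hI]; exact key
        _ = ENNReal.ofReal (C * (a ^ (ℓ + 1) * (1 / N))) :=
            (ENNReal.ofReal_mul hC.le).symm
    have hR : b ^ ℓ * r ≤ C * (a ^ (ℓ + 1) * (1 / N)) :=
      (ENNReal.ofReal_le_ofReal_iff (by positivity)).mp hle
    have h1N : (1 : ℝ) / N = 2 * r := by rw [hr]; field_simp
    have hRR : C * (a ^ (ℓ + 1) * (1 / N)) = (2 * C * a ^ (ℓ + 1)) * r := by
      rw [h1N]; ring
    have hfin : b ^ ℓ ≤ 2 * C * a ^ (ℓ + 1) := by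
      rw [hRR] at hR
      exact le_of_mul_le_mul_right hR hrpos
    rw [lt_div_iff₀ (pow_pos ha _)] at hℓgt
    linarith
end

section
/- Let (m, n) be a good pair. Then for every ℓ ≥ 1, the point P_ℓ = ⌊ℓ·log m/log n⌋ - 1 + 1/n^ℓ is an endpoint of m-adic intervals of length m^{-ℓ} (i.e., P_ℓ·m^ℓ ∈ ℤ), but P_ℓ is not of the form k/m^{ℓ-1} for any k ∈ ℤ; hence the intervals K_ℓ = [P_ℓ - m^{-ℓ}, P_ℓ) and L_ℓ = [P_ℓ, P_ℓ + m^{-ℓ}) are m-adic siblings contained in a common m-adic interval of length m^{-ℓ+1}. -/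
/-- For a good pair `(m, n)` and `ℓ ≥ 1`, the point `P_ℓ = ⌊ℓ·log m/log n⌋ - 1 + 1/n^ℓ`
satisfies `P_ℓ·m^ℓ ∈ ℤ` (it is an endpoint of `m`-adic intervals of length `m^{-ℓ}`), but
`P_ℓ ≠ k/m^(ℓ-1)` for every `k ∈ ℤ`; hence `K_ℓ = [P_ℓ - m^{-ℓ}, P_ℓ)` and
`L_ℓ = [P_ℓ, P_ℓ + m^{-ℓ})` are `m`-adic siblings contained in a common `m`-adic interval
of length `m^{-ℓ+1}`. -/
theorem stmt14 (m n : ℕ) (hn : 2 ≤ n) (hgood : GoodPair m n) :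
    ∀ ℓ : ℕ, 1 ≤ ℓ →
      (∃ z : ℤ, ((⌊(ℓ : ℝ) * Real.log m / Real.log n⌋ : ℝ) - 1 + 1 / (n : ℝ) ^ ℓ) *
          (m : ℝ) ^ ℓ = (z : ℝ)) ∧
      (¬ ∃ k : ℤ, (⌊(ℓ : ℝ) * Real.log m / Real.log n⌋ : ℝ) - 1 + 1 / (n : ℝ) ^ ℓ =
          (k : ℝ) / (m : ℝ) ^ (ℓ - 1)) ∧
      (∃ k : ℤ,
        Set.Ico ((⌊(ℓ : ℝ) * Real.log m / Real.log n⌋ : ℝ) - 1 + 1 / (n : ℝ) ^ ℓ -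
              1 / (m : ℝ) ^ ℓ)
            ((⌊(ℓ : ℝ) * Real.log m / Real.log n⌋ : ℝ) - 1 + 1 / (n : ℝ) ^ ℓ) ∪
          Set.Ico ((⌊(ℓ : ℝ) * Real.log m / Real.log n⌋ : ℝ) - 1 + 1 / (n : ℝ) ^ ℓ)
            ((⌊(ℓ : ℝ) * Real.log m / Real.log n⌋ : ℝ) - 1 + 1 / (n : ℝ) ^ ℓ +
              1 / (m : ℝ) ^ ℓ) ⊆
          Set.Ico (((k : ℝ) - 1) / (m : ℝ) ^ (ℓ - 1)) ((k : ℝ) / (m : ℝ) ^ (ℓ - 1))) := by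
  obtain ⟨hlt, hdvdp, hle, p, hp, hppos, hpeq⟩ := hgood
  have hn0 : 0 < n := by omega
  have hm0 : 0 < m := by omega
  have hdvd : n ∣ m := by
    rw [← Nat.factorization_le_iff_dvd hn0.ne' hm0.ne']
    intro q
    by_cases hq : q.Prime
    · exact hle q hq
    · simp [Nat.factorization_eq_zero_of_not_prime _ hq]
  intro ℓ hℓ
  set F : ℤ := ⌊(ℓ : ℝ) * Real.log m / Real.log n⌋ with hF
  set c : ℕ := (m / n) ^ ℓ with hcdef
  have hmn : m = n * (m / n) := (Nat.mul_div_cancel' hdvd).symm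
  have hc : m ^ ℓ = n ^ ℓ * c := by rw [hcdef, ← mul_pow, ← hmn]
  have hcr : (m : ℝ) ^ ℓ = (n : ℝ) ^ ℓ * c := by exact_mod_cast congrArg (Nat.cast : ℕ → ℝ) hc
  have hmr : (0:ℝ) < (m:ℝ) := by exact_mod_cast hm0
  have hnr : (0:ℝ) < (n:ℝ) := by exact_mod_cast hn0
  have hn0r : (0:ℝ) < (n : ℝ) ^ ℓ := by positivity
  have hm0r : (0:ℝ) < (m : ℝ) ^ ℓ := by positivity
  have hm1r : (0:ℝ) < (m : ℝ) ^ (ℓ - 1) := by positivity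
  have hPz : (F:ℝ) - 1 + 1/(n:ℝ)^ℓ = (((F - 1) * (m:ℤ) ^ ℓ + (c:ℤ) : ℤ) : ℝ) / (m:ℝ)^ℓ := by
    rw [eq_div_iff hm0r.ne']
    push_cast
    rw [hcr]
    field_simp
  refine ⟨⟨(F - 1) * (m:ℤ) ^ ℓ + (c:ℤ), ?_⟩, ?_, ?_⟩
  · rw [hPz, div_mul_cancel₀ _ hm0r.ne']
  · rintro ⟨k, hk⟩
    have hml : ((m:ℝ)) ^ (ℓ-1) ≠ 0 := hm1r.ne'
    have heqz : ((F - 1) * (n:ℤ)^ℓ + 1) * (m:ℤ)^(ℓ-1) = k * (n:ℤ)^ℓ := by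
      have h1 : ((((F - 1) * (n:ℤ)^ℓ + 1) * (m:ℤ)^(ℓ-1) : ℤ) : ℝ) = ((k * (n:ℤ)^ℓ : ℤ) : ℝ) := by
        push_cast
        field_simp at hk
        linarith [hk]
      exact_mod_cast h1
    have hdiv : (n:ℤ) ^ ℓ ∣ (m:ℤ) ^ (ℓ - 1) :=
      ⟨k - (F - 1) * (m:ℤ)^(ℓ-1), by linear_combination heqz⟩
    have hnat : n ^ ℓ ∣ m ^ (ℓ - 1) := by exact_mod_cast hdiv
    have hfac := (Nat.factorization_le_iff_dvd (pow_ne_zero _ hn0.ne')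
      (pow_ne_zero _ hm0.ne')).mpr hnat
    have h2 : ℓ * n.factorization p ≤ (ℓ - 1) * m.factorization p := by
      have h3 := hfac p
      simpa [Nat.factorization_pow] using h3
    rw [← hpeq] at h2
    have h4 : ℓ ≤ ℓ - 1 := Nat.le_of_mul_le_mul_right
      (by simpa [Nat.mul_comm] using h2) hppos
    omega
  · -- part 3
    have hq0 : 0 < m / n := Nat.div_pos (le_of_lt hlt) hn0
    have hc0 : c ≠ 0 := pow_ne_zero _ hq0.ne'
    have hqfact : (m / n).factorization p = 0 := by
      rw [Nat.factorization_div hdvd]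
      simp [Finsupp.sub_apply, hpeq]
    have hmc : ¬ m ∣ c := by
      intro hmc
      have hfac := (Nat.factorization_le_iff_dvd hm0.ne' hc0).mpr hmc
      have hle' := hfac p
      rw [hcdef] at hle'
      simp [Nat.factorization_pow, hqfact] at hle'
      omega
    set z : ℤ := (F - 1) * (m:ℤ) ^ ℓ + (c:ℤ) with hzdef
    have hmz : ¬ (m:ℤ) ∣ z := by
      intro h
      have hml : (m:ℤ) ∣ (m:ℤ)^ℓ := dvd_pow_self _ (by omega)
      have h1 : (m:ℤ) ∣ (c:ℤ) := by
        have := dvd_sub h (Dvd.dvd.mul_left hml (F-1))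
        simpa [hzdef] using this
      exact hmc (by exact_mod_cast h1)
    set k : ℤ := z / m + 1 with hkdef
    have hmz0 : (m:ℤ) ≠ 0 := by exact_mod_cast hm0.ne'
    have hdm : (m:ℤ) * (z / m) + z % m = z := Int.mul_ediv_add_emod z m
    have hr0 : 0 ≤ z % m := Int.emod_nonneg z hmz0
    have hrm : z % m < m := Int.emod_lt_of_pos z (by exact_mod_cast hm0)
    have hrne : z % m ≠ 0 := fun h => hmz (Int.dvd_of_emod_eq_zero h)
    have hkz1 : (m:ℤ) * (k - 1) + 1 ≤ z := by
      have : 1 ≤ z % m := lt_of_le_of_ne hr0 (Ne.symm hrne)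
      simp only [hkdef, add_sub_cancel_right]
      linarith
    have hkz2 : z + 1 ≤ (m:ℤ) * k := by
      simp only [hkdef]
      linarith
    have key1 : ((k:ℝ) - 1) * (m:ℝ) ≤ (z:ℝ) - 1 := by
      have : ((m * (k-1) : ℤ) : ℝ) ≤ ((z - 1 : ℤ) : ℝ) := by exact_mod_cast (by linarith : (m:ℤ) * (k-1) ≤ z - 1)
      push_cast at this
      linarith
    have key2 : (z:ℝ) + 1 ≤ (k:ℝ) * (m:ℝ) := by
      have : ((z + 1 : ℤ) : ℝ) ≤ ((m * k : ℤ) : ℝ) := by exact_mod_cast hkz2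
      push_cast at this
      linarith
    have hpow : (m:ℝ)^ℓ = (m:ℝ)^(ℓ-1) * m := by
      rw [← pow_succ, Nat.sub_add_cancel hℓ]
    have low : ((k:ℝ) - 1)/(m:ℝ)^(ℓ-1) ≤ ((z:ℝ) - 1)/(m:ℝ)^ℓ := by
      rw [div_le_div_iff₀ hm1r hm0r, hpow]
      nlinarith [mul_le_mul_of_nonneg_right key1 hm1r.le]
    have high : ((z:ℝ) + 1)/(m:ℝ)^ℓ ≤ (k:ℝ)/(m:ℝ)^(ℓ-1) := by
      rw [div_le_div_iff₀ hm0r hm1r, hpow]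
      nlinarith [mul_le_mul_of_nonneg_right key2 hm1r.le]
    have e1 : ((z:ℝ) - 1)/(m:ℝ)^ℓ = (z:ℝ)/(m:ℝ)^ℓ - 1/(m:ℝ)^ℓ := by ring
    have e2 : ((z:ℝ) + 1)/(m:ℝ)^ℓ = (z:ℝ)/(m:ℝ)^ℓ + 1/(m:ℝ)^ℓ := by ring
    have hPz' : (F:ℝ) - 1 + 1/(n:ℝ)^ℓ = (z:ℝ) / (m:ℝ)^ℓ := hPz
    have hinv : (0:ℝ) < 1/(m:ℝ)^ℓ := by positivity
    refine ⟨k, ?_⟩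
    rintro x (⟨hx1, hx2⟩ | ⟨hx1, hx2⟩) <;> constructor <;>
      [skip; skip; skip; skip] <;> rw [hPz'] at hx1 hx2 <;> linarith
end
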